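/- arXiv:2405.09103 — 7 statements merged into one kernel-verified Lean document; each statement's English description precedes it below -/
import Mathlib

section
/- Let T > 0. For i = 1,2, let a^i ∈ ℝ, s^i ∈ C[0,T], and let l^i, r^i : [0,T] × ℝ → ℝ satisfy Assumption (A) with the same constants 0 < c < C and l^i(T,a^i) ≤ 0 ≤ r^i(T,a^i). Let (x^i,k^i) be a solution of the backward Skorokhod problem BSP_{l^i}^{r^i}(s^i,a^i). Suppose L̄, R̄ ∈ [0,∞) satisfy |l¹(t,x) − l²(t,x)| ≤ L̄ and |r¹(t,x) − r²(t,x)| ≤ R̄ for all (t,x) ∈ [0,T] × ℝ. Then sup_{t∈[0,T]} |k¹(t) − k²(t)| ≤ 2(C/c)|a¹ − a²| + 4(C/c) sup_{t∈[0,T]} |s¹(t) − s²(t)| + (2/c) max(L̄, R̄). -/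
open MeasureTheory Set

/-- `I[0,T]`: continuous nondecreasing functions on `[0,T]` vanishing at `0`,
encoded as their constant extension to all of `ℝ`. -/
structure IFun (T : ℝ) where
  toFun : ℝ → ℝ
  mono : Monotone toFun
  cont : Continuous toFun
  zero_left : ∀ t ≤ (0 : ℝ), toFun t = 0
  const_right : ∀ t, T ≤ t → toFun t = toFun T

/-- The Stieltjes function associated with an element of `I[0,T]`. -/
noncomputable def IFun.stieltjes {T : ℝ} (k : IFun T) : StieltjesFunction ℝ where
  toFun := k.toFun
  mono' := k.mono
  right_continuous' := fun _ => k.cont.continuousAt.continuousWithinAt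

/-- The Lebesgue–Stieltjes measure induced by an element of `I[0,T]`. -/
noncomputable def IFun.measure {T : ℝ} (k : IFun T) : Measure ℝ := k.stieltjes.measure

/-- Solution of the backward Skorokhod problem `BSP_l^r(s,a)`:
`x(t) = a + s(T) - s(t) + k(T) - k(t)`, the constraints `l(t,x(t)) ≤ 0 ≤ r(t,x(t))`,
and `k = k^r - k^l` with `k^r, k^l ∈ I[0,T]` satisfying the Skorokhod conditions. -/
structure IsBSPSolution (T : ℝ) (l r : ℝ → ℝ → ℝ) (s : ℝ → ℝ) (a : ℝ)
    (x k : ℝ → ℝ) : Prop where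
  x_cont : ContinuousOn x (Icc 0 T)
  k_cont : ContinuousOn k (Icc 0 T)
  k_bv : BoundedVariationOn k (Icc 0 T)
  k_zero : k 0 = 0
  eqn : ∀ t ∈ Icc 0 T, x t = a + s T - s t + (k T - k t)
  lower : ∀ t ∈ Icc 0 T, l t (x t) ≤ 0
  upper : ∀ t ∈ Icc 0 T, 0 ≤ r t (x t)
  decomp : ∃ kr kl : IFun T, (∀ t ∈ Icc 0 T, k t = kr.toFun t - kl.toFun t) ∧
      (∫ t in Icc 0 T, l t (x t) ∂kl.measure) = 0 ∧
      (∫ t in Icc 0 T, r t (x t) ∂kr.measure) = 0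

/-- Assumption (A) on the boundary functions `l ≤ r`, with constants `0 < c < C`. -/
structure AssumptionA (T c C : ℝ) (l r : ℝ → ℝ → ℝ) : Prop where
  l_cont : ∀ x : ℝ, ContinuousOn (fun t => l t x) (Icc 0 T)
  r_cont : ∀ x : ℝ, ContinuousOn (fun t => r t x) (Icc 0 T)
  l_mono : ∀ t ∈ Icc (0 : ℝ) T, StrictMono (l t)
  r_mono : ∀ t ∈ Icc (0 : ℝ) T, StrictMono (r t)
  l_lip : ∀ t ∈ Icc (0 : ℝ) T, ∀ x y : ℝ,
      c * |x - y| ≤ |l t x - l t y| ∧ |l t x - l t y| ≤ C * |x - y|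
  r_lip : ∀ t ∈ Icc (0 : ℝ) T, ∀ x y : ℝ,
      c * |x - y| ≤ |r t x - r t y| ∧ |r t x - r t y| ≤ C * |x - y|
  sep : ∃ δ > (0 : ℝ), ∀ t ∈ Icc (0 : ℝ) T, ∀ x : ℝ, δ ≤ r t x - l t x

/-!
Write `ψ(t) = (k¹(T) - k¹(t)) - (k²(T) - k²(t))` and
`m = |a¹ - a²| + 2 sup |s¹ - s²| + max(L̄, R̄)/c`. The equations for `xⁱ` give
`ψ ≤ x¹ - x² + |a¹ - a²| + 2 sup |s¹ - s²|`, so wherever `ψ > m` we have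
`c (x¹ - x²) > max(L̄, R̄)`. By the two-sided Lipschitz bounds this forces `r¹(t, x¹) > 0` and
`l²(t, x²) < 0`, so the Skorokhod conditions freeze `k^{r,1}` and `k^{l,2}`, and `ψ` cannot
decrease forward in time. Since `ψ(T) = 0 ≤ m`, a first-passage argument gives `ψ ≤ m` on `[0,T]`.
Exchanging the roles of the two problems and using `k¹(t) - k²(t) = ψ(0) - ψ(t)` bounds
`|k¹ - k²|` by `2m`, which is at most the claimed bound because `C / c ≥ 1`.
-/

lemma continuousOn_comp_of_lipschitz {α : Type*} [TopologicalSpace α] {s : Set α} {C : ℝ}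
    {f : α → ℝ → ℝ} {x : α → ℝ} (hf_cont : ∀ y, ContinuousOn (fun t => f t y) s)
    (hf_lip : ∀ t ∈ s, ∀ y z, |f t y - f t z| ≤ C * |y - z|) (hx : ContinuousOn x s) :
    ContinuousOn (fun t => f t (x t)) s := by
  have hjoint : ContinuousOn (fun p : α × ℝ => f p.1 p.2) (s ×ˢ univ) :=
    continuousOn_prod_of_continuousOn_lipschitzOnWith' _ C.toNNReal
      (fun t ht => (LipschitzWith.of_dist_le' fun y z => by
        simpa only [Real.dist_eq] using hf_lip t ht y z).lipschitzOnWith)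
      (fun y _ => hf_cont y)
  exact hjoint.comp (continuousOn_id.prodMk hx) fun t ht => ⟨ht, mem_univ _⟩

lemma Monotone.add_mul_sub_le {f : ℝ → ℝ} {c x y : ℝ} (hf : Monotone f)
    (hlow : c * |x - y| ≤ |f x - f y|) (hyx : y ≤ x) : f y + c * (x - y) ≤ f x := by
  rw [abs_of_nonneg (sub_nonneg.2 hyx), abs_of_nonneg (sub_nonneg.2 (hf hyx))] at hlow
  linarith

lemma ContinuousOn.le_of_le_right_of_forall_above {ψ : ℝ → ℝ} {a b m : ℝ}
    (hψ : ContinuousOn ψ (Icc a b)) (hab : a ≤ b) (hb : ψ b ≤ m)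
    (hstep : ∀ t ∈ Ioc a b, (∀ u ∈ Ico a t, m < ψ u) → ψ a ≤ ψ t) : ψ a ≤ m := by
  by_contra! ha
  set A := Icc a b ∩ ψ ⁻¹' Iic m
  have hbA : b ∈ A := ⟨right_mem_Icc.2 hab, hb⟩
  have hA_bdd : BddBelow A := ⟨a, fun u hu => hu.1.1⟩
  have hA_closed : IsClosed A := hψ.preimage_isClosed_of_isClosed isClosed_Icc isClosed_Iic
  obtain ⟨⟨hat₁, ht₁b⟩, hψt₁⟩ : sInf A ∈ A := hA_closed.csInf_mem ⟨b, hbA⟩ hA_bdd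
  have hat₁' : a < sInf A := by
    refine lt_of_le_of_ne hat₁ fun h => ?_
    rw [← h] at hψt₁
    exact (lt_irrefl m) (ha.trans_le hψt₁)
  have habove : ∀ u ∈ Ico a (sInf A), m < ψ u := fun u hu =>
    not_le.1 fun hu' => (csInf_le hA_bdd ⟨⟨hu.1, hu.2.le.trans ht₁b⟩, hu'⟩).not_gt hu.2
  have := hstep _ ⟨hat₁', ht₁b⟩ habove
  exact (lt_irrefl m) (ha.trans_le (this.trans hψt₁))

lemma IFun.eq_of_setIntegral_eq_zero {T : ℝ} (k : IFun T) {f : ℝ → ℝ}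
    (hf : ContinuousOn f (Icc 0 T)) (hf_nonneg : ∀ t ∈ Icc (0 : ℝ) T, 0 ≤ f t)
    (hint : ∫ t in Icc 0 T, f t ∂k.measure = 0) {t₀ t : ℝ} (ht₀ : 0 ≤ t₀) (ht₀t : t₀ ≤ t)
    (ht : t ≤ T) (hne : ∀ u ∈ Ioo t₀ t, f u ≠ 0) : k.toFun t = k.toFun t₀ := by
  rw [IFun.measure] at hint
  have hae : f =ᵐ[k.stieltjes.measure.restrict (Icc 0 T)] 0 :=
    (setIntegral_eq_zero_iff_of_nonneg_ae
      ((ae_restrict_iff' measurableSet_Icc).2 (ae_of_all _ hf_nonneg))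
      (hf.integrableOn_compact isCompact_Icc)).1 hint
  have hnull : k.stieltjes.measure (Ioo t₀ t) = 0 := by
    have hae' := (ae_restrict_iff' measurableSet_Ioo).1
      (ae_restrict_of_ae_restrict_of_subset (Ioo_subset_Icc_self.trans
        (Icc_subset_Icc ht₀ ht)) hae)
    exact measure_eq_zero_iff_ae_notMem.2 (hae'.mono fun u hu hmem => hne u hmem (hu hmem))
  have hleft : Function.leftLim k.toFun t = k.toFun t :=
    k.mono.continuousWithinAt_Iio_iff_leftLim_eq.1 k.cont.continuousWithinAt
  rw [StieltjesFunction.measure_Ioo, ENNReal.ofReal_eq_zero] at hnull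
  change Function.leftLim k.toFun t - k.toFun t₀ ≤ 0 at hnull
  exact le_antisymm (by linarith) (k.mono ht₀t)

section TwoSolutions

variable {T c C S δ a₁ a₂ : ℝ} {l₁ r₁ l₂ r₂ : ℝ → ℝ → ℝ} {s₁ s₂ x₁ k₁ x₂ k₂ : ℝ → ℝ}

lemma IsBSPSolution.increment_sub_le_sub_add (hsol₁ : IsBSPSolution T l₁ r₁ s₁ a₁ x₁ k₁)
    (hsol₂ : IsBSPSolution T l₂ r₂ s₂ a₂ x₂ k₂) (hS : ∀ t ∈ Icc (0 : ℝ) T, |s₁ t - s₂ t| ≤ S)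
    {t : ℝ} (ht : t ∈ Icc 0 T) :
    (k₁ T - k₁ t) - (k₂ T - k₂ t) ≤ x₁ t - x₂ t + (|a₁ - a₂| + 2 * S) := by
  have hT : T ∈ Icc 0 T := ⟨ht.1.trans ht.2, le_rfl⟩
  have hx₁ := hsol₁.eqn t ht
  have hx₂ := hsol₂.eqn t ht
  have ha := neg_le_abs (a₁ - a₂)
  have hst := (abs_le.1 (hS t ht)).2
  have hsT := (abs_le.1 (hS T hT)).1
  linarith

lemma IsBSPSolution.increment_sub_le_of_gap (hc : 0 < c) (hA₁ : AssumptionA T c C l₁ r₁)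
    (hA₂ : AssumptionA T c C l₂ r₂) (hsol₁ : IsBSPSolution T l₁ r₁ s₁ a₁ x₁ k₁)
    (hsol₂ : IsBSPSolution T l₂ r₂ s₂ a₂ x₂ k₂)
    (hl : ∀ t ∈ Icc (0 : ℝ) T, ∀ x, |l₁ t x - l₂ t x| ≤ δ)
    (hr : ∀ t ∈ Icc (0 : ℝ) T, ∀ x, |r₁ t x - r₂ t x| ≤ δ)
    {t₀ t : ℝ} (ht₀ : 0 ≤ t₀) (ht₀t : t₀ ≤ t) (ht : t ≤ T)
    (hgap : ∀ u ∈ Ioo t₀ t, δ < c * (x₁ u - x₂ u)) :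
    (k₁ T - k₁ t₀) - (k₂ T - k₂ t₀) ≤ (k₁ T - k₁ t) - (k₂ T - k₂ t) := by
  obtain ⟨kr₁, kl₁, hk₁, -, hkr₁⟩ := hsol₁.decomp
  obtain ⟨kr₂, kl₂, hk₂, hkl₂, -⟩ := hsol₂.decomp
  have hu_mem : ∀ u ∈ Ioo t₀ t, u ∈ Icc 0 T := fun u hu => ⟨ht₀.trans hu.1.le, hu.2.le.trans ht⟩
  have hx_le : ∀ u ∈ Ioo t₀ t, x₂ u ≤ x₁ u := fun u hu =>
    sub_nonneg.1 (pos_of_mul_pos_right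
      (((abs_nonneg _).trans (hl u (hu_mem u hu) 0)).trans_lt (hgap u hu)) hc.le).le
  have hr₁ : ∀ u ∈ Ioo t₀ t, r₁ u (x₁ u) ≠ 0 := by
    intro u hu
    have hu' := hu_mem u hu
    have hmono := (hA₁.r_mono u hu').monotone.add_mul_sub_le (hA₁.r_lip u hu' _ _).1 (hx_le u hu)
    have hr₁₂ := (abs_le.1 (hr u hu' (x₂ u))).1
    have hr₂ := hsol₂.upper u hu'
    exact (show 0 < r₁ u (x₁ u) by linarith [hgap u hu]).ne'
  have hl₂ : ∀ u ∈ Ioo t₀ t, -l₂ u (x₂ u) ≠ 0 := by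
    intro u hu
    have hu' := hu_mem u hu
    have hmono := (hA₂.l_mono u hu').monotone.add_mul_sub_le (hA₂.l_lip u hu' _ _).1 (hx_le u hu)
    have hl₁₂ := (abs_le.1 (hl u hu' (x₁ u))).1
    have hl₁ := hsol₁.lower u hu'
    exact (show 0 < -l₂ u (x₂ u) by linarith [hgap u hu]).ne'
  have hkr₁_flat := kr₁.eq_of_setIntegral_eq_zero
    (continuousOn_comp_of_lipschitz hA₁.r_cont (fun u hu y z => (hA₁.r_lip u hu y z).2)
      hsol₁.x_cont) hsol₁.upper hkr₁ ht₀ ht₀t ht hr₁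
  have hkl₂_flat := kl₂.eq_of_setIntegral_eq_zero (f := fun u => -l₂ u (x₂ u))
    (continuousOn_comp_of_lipschitz hA₂.l_cont (fun u hu y z => (hA₂.l_lip u hu y z).2)
      hsol₂.x_cont).neg (fun u hu => neg_nonneg.2 (hsol₂.lower u hu))
    (by rw [integral_neg, hkl₂, neg_zero]) ht₀ ht₀t ht hl₂
  have ht₀_mem : t₀ ∈ Icc 0 T := ⟨ht₀, ht₀t.trans ht⟩
  have ht_mem : t ∈ Icc 0 T := ⟨ht₀.trans ht₀t, ht⟩
  linarith [kl₁.mono ht₀t, kr₂.mono ht₀t, hk₁ t ht_mem, hk₁ t₀ ht₀_mem, hk₂ t ht_mem,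
    hk₂ t₀ ht₀_mem]

lemma IsBSPSolution.increment_sub_le (hc : 0 < c) (hA₁ : AssumptionA T c C l₁ r₁)
    (hA₂ : AssumptionA T c C l₂ r₂) (hsol₁ : IsBSPSolution T l₁ r₁ s₁ a₁ x₁ k₁)
    (hsol₂ : IsBSPSolution T l₂ r₂ s₂ a₂ x₂ k₂)
    (hl : ∀ t ∈ Icc (0 : ℝ) T, ∀ x, |l₁ t x - l₂ t x| ≤ δ)
    (hr : ∀ t ∈ Icc (0 : ℝ) T, ∀ x, |r₁ t x - r₂ t x| ≤ δ)
    (hS : ∀ t ∈ Icc (0 : ℝ) T, |s₁ t - s₂ t| ≤ S) {t₀ : ℝ} (ht₀ : t₀ ∈ Icc 0 T) :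
    (k₁ T - k₁ t₀) - (k₂ T - k₂ t₀) ≤ |a₁ - a₂| + 2 * S + δ / c := by
  have hψ : ContinuousOn (fun t => (k₁ T - k₁ t) - (k₂ T - k₂ t)) (Icc t₀ T) :=
    ((continuousOn_const.sub hsol₁.k_cont).sub (continuousOn_const.sub hsol₂.k_cont)).mono
      (Icc_subset_Icc_left ht₀.1)
  have hm : 0 ≤ |a₁ - a₂| + 2 * S + δ / c := by
    have := (abs_nonneg _).trans (hS t₀ ht₀)
    have := div_nonneg ((abs_nonneg _).trans (hl t₀ ht₀ 0)) hc.le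
    positivity
  refine hψ.le_of_le_right_of_forall_above ht₀.2 (by simpa using hm) fun t ht habove => ?_
  refine hsol₁.increment_sub_le_of_gap hc hA₁ hA₂ hsol₂ hl hr ht₀.1 ht.1.le ht.2 fun u hu => ?_
  have hu' : u ∈ Icc 0 T := ⟨ht₀.1.trans hu.1.le, hu.2.le.trans ht.2⟩
  have hx := hsol₁.increment_sub_le_sub_add hsol₂ hS hu'
  have hψu := habove u (Ioo_subset_Ico_self hu)
  exact (div_lt_iff₀' hc).1 (by linarith)

end TwoSolutions

theorem stmt1_general (T c C : ℝ) (hc : 0 < c) (hcC : c < C)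
    (l₁ r₁ l₂ r₂ : ℝ → ℝ → ℝ) (s₁ s₂ : ℝ → ℝ) (a₁ a₂ : ℝ)
    (hA₁ : AssumptionA T c C l₁ r₁) (hA₂ : AssumptionA T c C l₂ r₂)
    (hs₁ : ContinuousOn s₁ (Icc 0 T)) (hs₂ : ContinuousOn s₂ (Icc 0 T))
    (x₁ k₁ x₂ k₂ : ℝ → ℝ)
    (hsol₁ : IsBSPSolution T l₁ r₁ s₁ a₁ x₁ k₁)
    (hsol₂ : IsBSPSolution T l₂ r₂ s₂ a₂ x₂ k₂)
    (Lb Rb : ℝ)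
    (hLb : ∀ t ∈ Icc (0 : ℝ) T, ∀ x : ℝ, |l₁ t x - l₂ t x| ≤ Lb)
    (hRb : ∀ t ∈ Icc (0 : ℝ) T, ∀ x : ℝ, |r₁ t x - r₂ t x| ≤ Rb) :
    ∀ t ∈ Icc (0 : ℝ) T,
      |k₁ t - k₂ t| ≤ 2 * (C / c) * |a₁ - a₂|
        + 4 * (C / c) * sSup ((fun u => |s₁ u - s₂ u|) '' Icc 0 T)
        + (2 / c) * max Lb Rb := by
  intro t ht
  have h0 : (0 : ℝ) ∈ Icc 0 T := ⟨le_rfl, ht.1.trans ht.2⟩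
  set S := sSup ((fun u => |s₁ u - s₂ u|) '' Icc 0 T)
  have hS : ∀ u ∈ Icc (0 : ℝ) T, |s₁ u - s₂ u| ≤ S := fun u hu =>
    le_csSup (isCompact_Icc.image_of_continuousOn (hs₁.sub hs₂).abs).bddAbove ⟨u, hu, rfl⟩
  have hl : ∀ u ∈ Icc (0 : ℝ) T, ∀ x, |l₁ u x - l₂ u x| ≤ max Lb Rb :=
    fun u hu x => (hLb u hu x).trans (le_max_left _ _)
  have hr : ∀ u ∈ Icc (0 : ℝ) T, ∀ x, |r₁ u x - r₂ u x| ≤ max Lb Rb :=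
    fun u hu x => (hRb u hu x).trans (le_max_right _ _)
  have hψ : ∀ u ∈ Icc (0 : ℝ) T,
      |(k₁ T - k₁ u) - (k₂ T - k₂ u)| ≤ |a₁ - a₂| + 2 * S + max Lb Rb / c := by
    intro u hu
    have h₁₂ := hsol₁.increment_sub_le hc hA₁ hA₂ hsol₂ hl hr hS hu
    have h₂₁ := hsol₂.increment_sub_le hc hA₂ hA₁ hsol₁ (by simpa only [abs_sub_comm] using hl)
      (by simpa only [abs_sub_comm] using hr) (by simpa only [abs_sub_comm] using hS) hu
    rw [abs_sub_comm a₂ a₁] at h₂₁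
    exact abs_le.2 ⟨by linarith, h₁₂⟩
  have hk : k₁ t - k₂ t = ((k₁ T - k₁ 0) - (k₂ T - k₂ 0)) - ((k₁ T - k₁ t) - (k₂ T - k₂ t)) := by
    rw [hsol₁.k_zero, hsol₂.k_zero]
    ring
  have hCc : 1 ≤ C / c := (one_le_div hc).2 hcC.le
  have ha := le_mul_of_one_le_left (abs_nonneg (a₁ - a₂)) hCc
  have hS' := le_mul_of_one_le_left ((abs_nonneg _).trans (hS 0 h0)) hCc
  calc |k₁ t - k₂ t| ≤ 2 * (|a₁ - a₂| + 2 * S + max Lb Rb / c) := by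
        rw [hk]
        linarith [abs_sub (k₁ T - k₁ 0 - (k₂ T - k₂ 0)) (k₁ T - k₁ t - (k₂ T - k₂ t)),
          hψ 0 h0, hψ t ht]
    _ ≤ 2 * (C / c) * |a₁ - a₂| + 4 * (C / c) * S + (2 / c) * max Lb Rb := by
        rw [div_mul_eq_mul_div, mul_div_assoc]
        linarith

/-- continuous dependence for the backward Skorokhod problem.
If `(xⁱ,kⁱ)` solves `BSP_{lⁱ}^{rⁱ}(sⁱ,aⁱ)`, `i = 1,2`, and the boundary functions
differ by at most `L̄`, `R̄`, then
`sup_t |k¹(t) - k²(t)| ≤ 2(C/c)|a¹-a²| + 4(C/c) sup_t |s¹(t)-s²(t)| + (2/c) max(L̄,R̄)`. -/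
theorem stmt1 (T c C : ℝ) (hT : 0 < T) (hc : 0 < c) (hcC : c < C)
    (l₁ r₁ l₂ r₂ : ℝ → ℝ → ℝ) (s₁ s₂ : ℝ → ℝ) (a₁ a₂ : ℝ)
    (hA₁ : AssumptionA T c C l₁ r₁) (hA₂ : AssumptionA T c C l₂ r₂)
    (hs₁ : ContinuousOn s₁ (Icc 0 T)) (hs₂ : ContinuousOn s₂ (Icc 0 T))
    (hla₁ : l₁ T a₁ ≤ 0) (hra₁ : 0 ≤ r₁ T a₁)
    (hla₂ : l₂ T a₂ ≤ 0) (hra₂ : 0 ≤ r₂ T a₂)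
    (x₁ k₁ x₂ k₂ : ℝ → ℝ)
    (hsol₁ : IsBSPSolution T l₁ r₁ s₁ a₁ x₁ k₁)
    (hsol₂ : IsBSPSolution T l₂ r₂ s₂ a₂ x₂ k₂)
    (Lb Rb : ℝ) (hLb0 : 0 ≤ Lb) (hRb0 : 0 ≤ Rb)
    (hLb : ∀ t ∈ Icc (0 : ℝ) T, ∀ x : ℝ, |l₁ t x - l₂ t x| ≤ Lb)
    (hRb : ∀ t ∈ Icc (0 : ℝ) T, ∀ x : ℝ, |r₁ t x - r₂ t x| ≤ Rb) :
    ∀ t ∈ Icc (0 : ℝ) T,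
      |k₁ t - k₂ t| ≤ 2 * (C / c) * |a₁ - a₂|
        + 4 * (C / c) * sSup ((fun u => |s₁ u - s₂ u|) '' Icc 0 T)
        + (2 / c) * max Lb Rb :=
  stmt1_general T c C hc hcC l₁ r₁ l₂ r₂ s₁ s₂ a₁ a₂ hA₁ hA₂ hs₁ hs₂ x₁ k₁ x₂ k₂ hsol₁ hsol₂ Lb Rb
    hLb hRb
end

section
/- Let T > 0, let l, r : [0,T] × ℝ → ℝ satisfy l ≤ r pointwise, let s ∈ C[0,T] and a ∈ ℝ. Define s̃(t) := a + s(T) − s(T−t), l̃(t,x) := l(T−t,x) and r̃(t,x) := r(T−t,x) for (t,x) ∈ [0,T] × ℝ. Suppose (x̃, k̃) is a solution of the forward Skorokhod problem SP_{l̃}^{r̃}(s̃). Define x(t) := x̃(T−t) and k(t) := k̃(T) − k̃(T−t) for t ∈ [0,T]. Then l(T,a) ≤ 0 ≤ r(T,a) and (x,k) is a solution of the backward Skorokhod problem BSP_l^r(s,a). -/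
/-!
Everything is transported along the time reversal `t ↦ T - t`, which maps `[0,T]` onto
itself. Evaluating the forward equation at `t = 0`, where `k̃(0) = 0`, gives `x̃(0) = a`,
hence the constraint at time `T`. Each component `k̃ᶜ` (`c ∈ {l, r}`) of the regulator is reversed to
`t ↦ k̃ᶜ(T) - k̃ᶜ(T - t)`; since `k̃ᶜ` is continuous, the Lebesgue–Stieltjes measure of the reversed
function is the pushforward of `dk̃ᶜ` under `t ↦ T - t`, so the complementarity integrals are the
forward ones after a change of variables.
-/

open MeasureTheory Set

/-- Solution of the (forward) Skorokhod problem `SP_l^r(s)`: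
`x(t) = s(t) + k(t)`, the constraints `l(t,x(t)) ≤ 0 ≤ r(t,x(t))`,
and `k = k^r - k^l` with `k^r, k^l ∈ I[0,T]` satisfying the Skorokhod conditions. -/
structure IsSPSolution (T : ℝ) (l r : ℝ → ℝ → ℝ) (s : ℝ → ℝ)
    (x k : ℝ → ℝ) : Prop where
  x_cont : ContinuousOn x (Icc 0 T)
  k_cont : ContinuousOn k (Icc 0 T)
  k_bv : BoundedVariationOn k (Icc 0 T)
  k_zero : k 0 = 0
  eqn : ∀ t ∈ Icc 0 T, x t = s t + k t
  lower : ∀ t ∈ Icc 0 T, l t (x t) ≤ 0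
  upper : ∀ t ∈ Icc 0 T, 0 ≤ r t (x t)
  decomp : ∃ kr kl : IFun T, (∀ t ∈ Icc 0 T, k t = kr.toFun t - kl.toFun t) ∧
      (∫ t in Icc 0 T, l t (x t) ∂kl.measure) = 0 ∧
      (∫ t in Icc 0 T, r t (x t) ∂kr.measure) = 0

namespace IFun

variable {T : ℝ}

noncomputable def reflect (k : IFun T) : IFun T where
  toFun t := k.toFun T - k.toFun (T - t)
  mono _ _ hab := sub_le_sub_left (k.mono (sub_le_sub_left hab T)) _
  cont := continuous_const.sub (k.cont.comp (continuous_const.sub continuous_id))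
  zero_left t ht := by rw [k.const_right (T - t) (by linarith), sub_self]
  const_right t ht := by rw [k.zero_left (T - t) (by linarith), sub_self, k.zero_left 0 le_rfl]

instance (k : IFun T) : IsLocallyFiniteMeasure k.measure :=
  inferInstanceAs (IsLocallyFiniteMeasure k.stieltjes.measure)

lemma measure_reflect (k : IFun T) : k.reflect.measure = k.measure.map (T - ·) := by
  -- `T - ·` pulls `Ioc` back to `Ico`, whose measure involves left limits; `k` is continuous.
  refine Measure.ext_of_Ioc _ _ fun a b _ => ?_
  rw [Measure.map_apply (by fun_prop) measurableSet_Ioc, preimage_const_sub_Ioc, measure,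
    measure, StieltjesFunction.measure_Ioc, StieltjesFunction.measure_Ico]
  change ENNReal.ofReal ((k.toFun T - k.toFun (T - b)) - (k.toFun T - k.toFun (T - a))) =
    ENNReal.ofReal (Function.leftLim k.toFun (T - a) - Function.leftLim k.toFun (T - b))
  rw [k.cont.continuousAt.continuousWithinAt.leftLim_eq,
    k.cont.continuousAt.continuousWithinAt.leftLim_eq, sub_sub_sub_cancel_left]

lemma setIntegral_Icc_reflect (k : IFun T) (f : ℝ → ℝ) :
    ∫ t in Icc 0 T, f t ∂k.reflect.measure = ∫ t in Icc 0 T, f (T - t) ∂k.measure := by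
  have hemb : MeasurableEmbedding (T - · : ℝ → ℝ) :=
    (MeasurableEquiv.subLeft T).measurableEmbedding
  rw [measure_reflect, hemb.setIntegral_map, preimage_const_sub_Icc, sub_self, sub_zero]

end IFun

lemma BoundedVariationOn.comp_const_sub {E : Type*} [PseudoEMetricSpace E] {f : ℝ → E}
    {s : Set ℝ} (hf : BoundedVariationOn f s) (c : ℝ) :
    BoundedVariationOn (fun t => f (c - t)) ((c - ·) ⁻¹' s) := by
  have hanti : AntitoneOn (c - ·) ((c - ·) ⁻¹' s) := fun _ _ _ _ h => sub_le_sub_left h c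
  rw [BoundedVariationOn, ← Function.comp_def, eVariationOn.comp_eq_of_antitoneOn f _ hanti,
    image_preimage_eq s fun y => ⟨c - y, sub_sub_cancel c y⟩]
  exact hf

lemma BoundedVariationOn.const_sub {E : Type*} [SeminormedAddCommGroup E] {f : ℝ → E}
    {s : Set ℝ} (hf : BoundedVariationOn f s) (c : E) :
    BoundedVariationOn (fun t => c - f t) s :=
  (IsometryEquiv.subLeft c).isometry.lipschitz.comp_boundedVariationOn hf

lemma IsSPSolution.apply_zero {T : ℝ} {l r : ℝ → ℝ → ℝ} {s x k : ℝ → ℝ}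
    (hsol : IsSPSolution T l r s x k) (hT : 0 ≤ T) : x 0 = s 0 := by
  simpa [hsol.k_zero] using hsol.eqn 0 ⟨le_rfl, hT⟩

theorem stmt3_general (T : ℝ) (hT : 0 < T) (l r : ℝ → ℝ → ℝ)
    (s : ℝ → ℝ) (a : ℝ)
    (xt kt : ℝ → ℝ)
    (hsol : IsSPSolution T (fun t x => l (T - t) x) (fun t x => r (T - t) x)
      (fun t => a + s T - s (T - t)) xt kt) :
    l T a ≤ 0 ∧ 0 ≤ r T a ∧
      IsBSPSolution T l r s a (fun t => xt (T - t)) (fun t => kt T - kt (T - t)) := by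
  have h0 : (0 : ℝ) ∈ Icc 0 T := ⟨le_rfl, hT.le⟩
  have hrefl : MapsTo (T - ·) (Icc 0 T) (Icc 0 T) := fun _ ht => sub_mem_Icc_zero_iff_right.2 ht
  have hxt0 : xt 0 = a := by simpa using hsol.apply_zero hT.le
  obtain ⟨kr, kl, hdec, hl, hr⟩ := hsol.decomp
  have hrefl_cont : ContinuousOn (T - ·) (Icc 0 T) := by fun_prop
  refine ⟨by simpa [hxt0] using hsol.lower 0 h0, by simpa [hxt0] using hsol.upper 0 h0, ?_⟩
  exact
  { x_cont := hsol.x_cont.comp hrefl_cont hrefl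
    k_cont := continuousOn_const.sub (hsol.k_cont.comp hrefl_cont hrefl)
    k_bv := by simpa using (hsol.k_bv.comp_const_sub T).const_sub (kt T)
    k_zero := by simp
    eqn := fun t ht => by simp [hsol.eqn (T - t) (hrefl ht), hsol.k_zero]
    lower := fun t ht => by simpa using hsol.lower (T - t) (hrefl ht)
    upper := fun t ht => by simpa using hsol.upper (T - t) (hrefl ht)
    decomp := ⟨kr.reflect, kl.reflect,
      fun t ht => by simp [IFun.reflect, hdec T ⟨hT.le, le_rfl⟩, hdec (T - t) (hrefl ht)]; ring,
      by simpa [IFun.setIntegral_Icc_reflect] using hl,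
      by simpa [IFun.setIntegral_Icc_reflect] using hr⟩ }

/-- time reversal: if `(x̃,k̃)` solves the forward Skorokhod problem
for `s̃(t) = a + s(T) - s(T-t)` with boundaries `l̃(t,x) = l(T-t,x)`,
`r̃(t,x) = r(T-t,x)`, then `l(T,a) ≤ 0 ≤ r(T,a)` and
`(x̃(T-·), k̃(T) - k̃(T-·))` solves the backward Skorokhod problem `BSP_l^r(s,a)`. -/
theorem stmt3 (T : ℝ) (hT : 0 < T) (l r : ℝ → ℝ → ℝ)
    (hlr : ∀ t ∈ Icc (0 : ℝ) T, ∀ x : ℝ, l t x ≤ r t x)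
    (s : ℝ → ℝ) (hs : ContinuousOn s (Icc 0 T)) (a : ℝ)
    (xt kt : ℝ → ℝ)
    (hsol : IsSPSolution T (fun t x => l (T - t) x) (fun t x => r (T - t) x)
      (fun t => a + s T - s (T - t)) xt kt) :
    l T a ≤ 0 ∧ 0 ≤ r T a ∧
      IsBSPSolution T l r s a (fun t => xt (T - t)) (fun t => kt T - kt (T - t)) :=
  stmt3_general T hT l r s a xt kt hsol
end

section
/- Let T > 0. For i = 1,2, let a^i ∈ ℝ, s^i ∈ C[0,T], and let l^i, r^i : [0,T] × ℝ → ℝ satisfy Assumption (A) with the same constants 0 < c < C and l^i(T,a^i) ≤ 0 ≤ r^i(T,a^i), and let (x^i,k^i) be a solution of the backward Skorokhod problem BSP_{l^i}^{r^i}(s^i,a^i). Fix t ∈ [0,T] and suppose L̄, R̄, S̄ ∈ [0,∞) satisfy |l¹(v,x) − l²(v,x)| ≤ L̄ and |r¹(v,x) − r²(v,x)| ≤ R̄ for all (v,x) ∈ [t,T] × ℝ, and |(a¹ + s¹(T) − s¹(v)) − (a² + s²(T) − s²(v))| ≤ S̄ for all v ∈ [t,T]. Then |(k¹(T) − k¹(t))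 − (k²(T) − k²(t))| ≤ (C/c) S̄ + (1/c) max(L̄, R̄). -/
open MeasureTheory Set

/-! Let `f v = (k¹(T) - k¹(v)) - (k²(T) - k²(v))`, so `f T = 0`, and suppose `f t > M`, where
`M = (C/c) S̄ + max(L̄, R̄)/c`. Then `f` drops below `f t` at some `v > t` while staying above `M`
on `(t, v]`. On `(t, v]` the function `k¹` grows more than `k²`, so `k^{r,1}` or `k^{l,2}` charges
`(t, v]`, and the Skorokhod conditions give a `z ∈ (t, v]` with `r¹(z, x¹(z)) = 0` or
`l²(z, x²(z)) = 0`. There `x¹(z) - x²(z) ≥ f z - S̄ > max(L̄, R̄)/c`, whereas `0 ≤ r²(z, x²(z))`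
(resp. `l¹(z, x¹(z)) ≤ 0`) and the lower Lipschitz bound of `r²(z, ·)` (resp. `l²(z, ·)`) force
`c (x¹(z) - x²(z)) ≤ max(L̄, R̄)`. Exchanging the two problems bounds `-f t`. -/

theorem StieltjesFunction.exists_mem_Ioc_eq_zero_of_setIntegral_eq_zero (f : StieltjesFunction ℝ)
    {g : ℝ → ℝ} {s : Set ℝ} {u v : ℝ} (hs : MeasurableSet s) (hg : IntegrableOn g s f.measure)
    (hg0 : ∀ x ∈ s, 0 ≤ g x) (hint : ∫ x in s, g x ∂f.measure = 0) (hsub : Ioc u v ⊆ s)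
    (huv : f u < f v) : ∃ z ∈ Ioc u v, g z = 0 := by
  by_contra! hne
  have hae : g =ᵐ[f.measure.restrict s] 0 :=
    (setIntegral_eq_zero_iff_of_nonneg_ae (ae_restrict_of_forall_mem hs hg0) hg).1 hint
  have hnull : f.measure (Ioc u v) = 0 := by
    have hbad := (ae_restrict_iff' hs).1 hae
    rw [ae_iff] at hbad
    exact measure_mono_null (fun z hz => fun h => hne z hz (h (hsub hz))) hbad
  rw [f.measure_Ioc, ENNReal.ofReal_eq_zero] at hnull
  linarith

theorem ContinuousOn.apply_of_lipschitzWith {α β γ : Type*} [TopologicalSpace α]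
    [PseudoEMetricSpace β] [PseudoEMetricSpace γ] {F : α → β → γ} {x : α → β} {s : Set α}
    {K : NNReal} (hx : ContinuousOn x s) (hF : ∀ y, ContinuousOn (fun t => F t y) s)
    (hlip : ∀ t ∈ s, LipschitzWith K (F t)) : ContinuousOn (fun t => F t (x t)) s :=
  (continuousOn_prod_of_continuousOn_lipschitzOnWith' (Function.uncurry F) K
    (fun t ht => (hlip t ht).lipschitzOnWith) (fun y _ => hF y)).comp
    (continuousOn_id.prodMk hx) fun _ ht => ⟨ht, mem_univ _⟩

theorem ContinuousOn.exists_lt_of_lt_of_le {f : ℝ → ℝ} {a b M : ℝ} (hf : ContinuousOn f (Icc a b))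
    (hab : a ≤ b) (ha : M < f a) (hb : f b ≤ M) :
    ∃ v ∈ Ioc a b, f v < f a ∧ ∀ z ∈ Ioc a v, M < f z := by
  set S := Icc a b ∩ f ⁻¹' Iic M
  have hS : IsCompact S :=
    isCompact_Icc.of_isClosed_subset (hf.preimage_isClosed_of_isClosed isClosed_Icc isClosed_Iic)
      inter_subset_left
  obtain ⟨⟨haw, hwb⟩, hfw⟩ : sInf S ∈ S := hS.sInf_mem ⟨b, ⟨hab, le_rfl⟩, hb⟩
  have habove : ∀ z ∈ Ico a (sInf S), M < f z := fun z hz => by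
    by_contra! hfz
    exact (csInf_le hS.bddBelow ⟨⟨hz.1, hz.2.le.trans hwb⟩, hfz⟩).not_gt hz.2
  obtain ⟨v, ⟨hav, hvw⟩, hfv⟩ : (M + f a) / 2 ∈ f '' Icc a (sInf S) :=
    intermediate_value_Icc' haw (hf.mono (Icc_subset_Icc_right hwb))
      ⟨by simp only [mem_preimage, mem_Iic] at hfw; linarith, by linarith⟩
  have hvw' : v < sInf S := hvw.lt_of_ne <| by
    rintro rfl
    simp only [mem_preimage, mem_Iic] at hfw
    linarith
  refine ⟨v, ⟨hav.lt_of_ne (by rintro rfl; linarith), hvw'.le.trans hwb⟩, by linarith,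
    fun z hz => habove z ⟨hz.1.le, hz.2.trans_lt hvw'⟩⟩

theorem Monotone.sub_le_div_of_mul_abs_sub_le {ψ : ℝ → ℝ} {c R x y : ℝ} (hψ : Monotone ψ)
    (hlip : c * |x - y| ≤ |ψ x - ψ y|) (hc : 0 < c) (hR : 0 ≤ R) (h : ψ x - ψ y ≤ R) :
    x - y ≤ R / c := by
  rcases le_total x y with hxy | hyx
  · exact (sub_nonpos.2 hxy).trans (by positivity)
  · rw [abs_of_nonneg (sub_nonneg.2 hyx), abs_of_nonneg (sub_nonneg.2 (hψ hyx))] at hlip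
    rw [le_div_iff₀ hc]
    linarith

namespace IsBSPSolution

variable {T c C : ℝ} {l r : ℝ → ℝ → ℝ} {s : ℝ → ℝ} {a : ℝ} {x k : ℝ → ℝ}

theorem exists_decomp_active (hA : AssumptionA T c C l r) (hsol : IsBSPSolution T l r s a x k) :
    ∃ kr kl : IFun T, (∀ t ∈ Icc 0 T, k t = kr.toFun t - kl.toFun t) ∧
      (∀ u v, Ioc u v ⊆ Icc 0 T → kr.toFun u < kr.toFun v → ∃ z ∈ Ioc u v, r z (x z) = 0) ∧
      (∀ u v, Ioc u v ⊆ Icc 0 T → kl.toFun u < kl.toFun v → ∃ z ∈ Ioc u v, l z (x z) = 0) := by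
  obtain ⟨kr, kl, hk, hl, hr⟩ := hsol.decomp
  have hlc : ContinuousOn (fun t => l t (x t)) (Icc 0 T) :=
    hsol.x_cont.apply_of_lipschitzWith hA.l_cont fun t ht =>
      LipschitzWith.of_dist_le' fun y z => by simpa only [Real.dist_eq] using (hA.l_lip t ht y z).2
  have hrc : ContinuousOn (fun t => r t (x t)) (Icc 0 T) :=
    hsol.x_cont.apply_of_lipschitzWith hA.r_cont fun t ht =>
      LipschitzWith.of_dist_le' fun y z => by simpa only [Real.dist_eq] using (hA.r_lip t ht y z).2
  refine ⟨kr, kl, hk, fun u v hsub huv => ?_, fun u v hsub huv => ?_⟩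
  · exact kr.stieltjes.exists_mem_Ioc_eq_zero_of_setIntegral_eq_zero measurableSet_Icc
      (hrc.integrableOn_compact isCompact_Icc) hsol.upper hr hsub huv
  · obtain ⟨z, hz, hz0⟩ := kl.stieltjes.exists_mem_Ioc_eq_zero_of_setIntegral_eq_zero
      (g := fun t => -l t (x t)) measurableSet_Icc (hlc.neg.integrableOn_compact isCompact_Icc)
      (fun t ht => neg_nonneg.2 (hsol.lower t ht)) (by rw [integral_neg]; exact neg_eq_zero.2 hl)
      hsub huv
    exact ⟨z, hz, neg_eq_zero.1 hz0⟩

variable {l' r' : ℝ → ℝ → ℝ} {s' : ℝ → ℝ} {a' : ℝ} {x' k' : ℝ → ℝ}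

theorem exists_active_of_sub_lt_sub (hA : AssumptionA T c C l r) (hA' : AssumptionA T c C l' r')
    (hsol : IsBSPSolution T l r s a x k) (hsol' : IsBSPSolution T l' r' s' a' x' k')
    {u v : ℝ} (hu : 0 ≤ u) (huv : u ≤ v) (hv : v ≤ T) (hlt : k' v - k' u < k v - k u) :
    ∃ z ∈ Ioc u v, r z (x z) = 0 ∨ l' z (x' z) = 0 := by
  obtain ⟨kr, kl, hk, hr, -⟩ := hsol.exists_decomp_active hA
  obtain ⟨kr', kl', hk', -, hl'⟩ := hsol'.exists_decomp_active hA'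
  have hsub : Ioc u v ⊆ Icc 0 T := Ioc_subset_Icc_self.trans (Icc_subset_Icc hu hv)
  have hu' : u ∈ Icc 0 T := ⟨hu, huv.trans hv⟩
  have hv' : v ∈ Icc 0 T := ⟨hu.trans huv, hv⟩
  rw [hk u hu', hk v hv', hk' u hu', hk' v hv'] at hlt
  have hgrow : kr.toFun u < kr.toFun v ∨ kl'.toFun u < kl'.toFun v := by
    by_contra! hflat
    linarith [kl.mono huv, kr'.mono huv, hflat.1, hflat.2]
  rcases hgrow with hgrow | hgrow
  · obtain ⟨z, hz, hz0⟩ := hr u v hsub hgrow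
    exact ⟨z, hz, Or.inl hz0⟩
  · obtain ⟨z, hz, hz0⟩ := hl' u v hsub hgrow
    exact ⟨z, hz, Or.inr hz0⟩

theorem increment_sub_increment_le (hc : 0 < c) (hcC : c ≤ C) (hA : AssumptionA T c C l r)
    (hA' : AssumptionA T c C l' r') (hsol : IsBSPSolution T l r s a x k)
    (hsol' : IsBSPSolution T l' r' s' a' x' k') {t Lb Rb Sb : ℝ} (ht : t ∈ Icc 0 T)
    (hLb : ∀ v ∈ Icc t T, ∀ y : ℝ, |l v y - l' v y| ≤ Lb)
    (hRb : ∀ v ∈ Icc t T, ∀ y : ℝ, |r v y - r' v y| ≤ Rb)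
    (hSb : ∀ v ∈ Icc t T, |(a + s T - s v) - (a' + s' T - s' v)| ≤ Sb) :
    (k T - k t) - (k' T - k' t) ≤ C / c * Sb + 1 / c * max Lb Rb := by
  set M := C / c * Sb + 1 / c * max Lb Rb
  set f : ℝ → ℝ := fun v => (k T - k v) - (k' T - k' v) with hf
  have htT : t ∈ Icc t T := ⟨le_rfl, ht.2⟩
  have hSb0 : 0 ≤ Sb := (abs_nonneg _).trans (hSb t htT)
  have hmax0 : 0 ≤ max Lb Rb := ((abs_nonneg _).trans (hLb t htT 0)).trans (le_max_left _ _)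
  have hM : Sb + max Lb Rb / c ≤ M := by
    have : Sb ≤ C / c * Sb := le_mul_of_one_le_left hSb0 ((one_le_div hc).2 hcC)
    rw [div_eq_inv_mul, ← one_div]
    linarith
  by_contra! hgt
  have hfc : ContinuousOn f (Icc t T) :=
    have hsub : Icc t T ⊆ Icc 0 T := Icc_subset_Icc_left ht.1
    (continuousOn_const.sub (hsol.k_cont.mono hsub)).sub
      (continuousOn_const.sub (hsol'.k_cont.mono hsub))
  obtain ⟨v, hv, hfv, habove⟩ := hfc.exists_lt_of_lt_of_le ht.2 hgt (by
    simp only [hf, sub_self]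
    linarith [div_nonneg hmax0 hc.le])
  obtain ⟨z, hz, hact⟩ := hsol.exists_active_of_sub_lt_sub hA hA' hsol' ht.1 hv.1.le hv.2
    (by simp only [hf] at hfv; linarith)
  have hzT : z ∈ Icc t T := ⟨hz.1.le, hz.2.trans hv.2⟩
  have hz0 : z ∈ Icc 0 T := ⟨ht.1.trans hzT.1, hzT.2⟩
  have hgap : x z - x' z ≤ max Lb Rb / c := by
    have hL := abs_le.1 (hLb z hzT (x z))
    have hR := abs_le.1 (hRb z hzT (x z))
    rcases hact with hr | hl
    · calc x z - x' z ≤ Rb / c :=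
            (hA'.r_mono z hz0).monotone.sub_le_div_of_mul_abs_sub_le (hA'.r_lip z hz0 _ _).1 hc
              ((abs_nonneg _).trans (hRb z hzT (x z))) (by linarith [hsol'.upper z hz0])
        _ ≤ max Lb Rb / c := by gcongr; exact le_max_right _ _
    · calc x z - x' z ≤ Lb / c :=
            (hA'.l_mono z hz0).monotone.sub_le_div_of_mul_abs_sub_le (hA'.l_lip z hz0 _ _).1 hc
              ((abs_nonneg _).trans (hLb z hzT (x z))) (by linarith [hsol.lower z hz0])
        _ ≤ max Lb Rb / c := by gcongr; exact le_max_left _ _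
  have hfz := habove z hz
  simp only [hf] at hfz
  linarith [hsol.eqn z hz0, hsol'.eqn z hz0, abs_le.1 (hSb z hzT)]

end IsBSPSolution

theorem stmt4_general (T c C : ℝ) (hc : 0 < c) (hcC : c < C)
    (l₁ r₁ l₂ r₂ : ℝ → ℝ → ℝ) (s₁ s₂ : ℝ → ℝ) (a₁ a₂ : ℝ)
    (hA₁ : AssumptionA T c C l₁ r₁) (hA₂ : AssumptionA T c C l₂ r₂)
    (x₁ k₁ x₂ k₂ : ℝ → ℝ)
    (hsol₁ : IsBSPSolution T l₁ r₁ s₁ a₁ x₁ k₁)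
    (hsol₂ : IsBSPSolution T l₂ r₂ s₂ a₂ x₂ k₂)
    (t : ℝ) (ht : t ∈ Icc (0 : ℝ) T)
    (Lb Rb Sb : ℝ)
    (hLb : ∀ v ∈ Icc t T, ∀ x : ℝ, |l₁ v x - l₂ v x| ≤ Lb)
    (hRb : ∀ v ∈ Icc t T, ∀ x : ℝ, |r₁ v x - r₂ v x| ≤ Rb)
    (hSb : ∀ v ∈ Icc t T, |(a₁ + s₁ T - s₁ v) - (a₂ + s₂ T - s₂ v)| ≤ Sb) :
    |(k₁ T - k₁ t) - (k₂ T - k₂ t)| ≤ (C / c) * Sb + (1 / c) * max Lb Rb := by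
  rw [abs_sub_le_iff]
  constructor
  · exact hsol₁.increment_sub_increment_le hc hcC.le hA₁ hA₂ hsol₂ ht hLb hRb hSb
  · exact hsol₂.increment_sub_increment_le hc hcC.le hA₂ hA₁ hsol₁ ht
      (fun v hv y => abs_sub_comm (l₁ v y) _ ▸ hLb v hv y)
      (fun v hv y => abs_sub_comm (r₁ v y) _ ▸ hRb v hv y)
      (fun v hv => abs_sub_comm (a₁ + s₁ T - s₁ v) _ ▸ hSb v hv)

/-- local continuous dependence on `[t,T]`: if the boundary
functions differ by at most `L̄`, `R̄` on `[t,T] × ℝ` and the shifted inputs differ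
by at most `S̄` on `[t,T]`, then
`|(k¹(T) - k¹(t)) - (k²(T) - k²(t))| ≤ (C/c) S̄ + (1/c) max(L̄,R̄)`. -/
theorem stmt4 (T c C : ℝ) (hT : 0 < T) (hc : 0 < c) (hcC : c < C)
    (l₁ r₁ l₂ r₂ : ℝ → ℝ → ℝ) (s₁ s₂ : ℝ → ℝ) (a₁ a₂ : ℝ)
    (hA₁ : AssumptionA T c C l₁ r₁) (hA₂ : AssumptionA T c C l₂ r₂)
    (hs₁ : ContinuousOn s₁ (Icc 0 T)) (hs₂ : ContinuousOn s₂ (Icc 0 T))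
    (hla₁ : l₁ T a₁ ≤ 0) (hra₁ : 0 ≤ r₁ T a₁)
    (hla₂ : l₂ T a₂ ≤ 0) (hra₂ : 0 ≤ r₂ T a₂)
    (x₁ k₁ x₂ k₂ : ℝ → ℝ)
    (hsol₁ : IsBSPSolution T l₁ r₁ s₁ a₁ x₁ k₁)
    (hsol₂ : IsBSPSolution T l₂ r₂ s₂ a₂ x₂ k₂)
    (t : ℝ) (ht : t ∈ Icc (0 : ℝ) T)
    (Lb Rb Sb : ℝ) (hLb0 : 0 ≤ Lb) (hRb0 : 0 ≤ Rb) (hSb0 : 0 ≤ Sb)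
    (hLb : ∀ v ∈ Icc t T, ∀ x : ℝ, |l₁ v x - l₂ v x| ≤ Lb)
    (hRb : ∀ v ∈ Icc t T, ∀ x : ℝ, |r₁ v x - r₂ v x| ≤ Rb)
    (hSb : ∀ v ∈ Icc t T, |(a₁ + s₁ T - s₁ v) - (a₂ + s₂ T - s₂ v)| ≤ Sb) :
    |(k₁ T - k₁ t) - (k₂ T - k₂ t)| ≤ (C / c) * Sb + (1 / c) * max Lb Rb :=
  stmt4_general T c C hc hcC l₁ r₁ l₂ r₂ s₁ s₂ a₁ a₂ hA₁ hA₂ x₁ k₁ x₂ k₂ hsol₁ hsol₂ t ht Lb Rb Sb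
    hLb hRb hSb
end

section
/- Let T > 0 and let φ, ψ : [0,T] × ℝ → ℝ be continuous functions such that ψ(t,·) and φ(t,·) are strictly increasing for every t ∈ [0,T]. For i = 1, 2, let A^{R,i}, A^{L,i} ∈ I[0,T], set A^i := A^{R,i} − A^{L,i} and y^i(t) := A^i(T) − A^i(t), and assume: ψ(t, y^i(t)) ≤ 0 ≤ φ(t, y^i(t)) for all t ∈ [0,T]; ∫_0^T φ(t, y^i(t)) dA^{R,i}(t) = 0 and ∫_0^T ψ(t, y^i(t)) dA^{L,i}(t) = 0, the integrals being Lebesgue–Stieltjes integrals. Then A^1(T) − A^1(t) = A^2(T) − A^2(t) for all t ∈ [0,T]; equivalently, A^1(t) = A^2(t) for all t ∈ [0,T]. -/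
open MeasureTheory Set

/-- The "backward remainder" `t ↦ A(T) - A(t)` of `A = A^R - A^L`. -/
noncomputable def backRem (T : ℝ) (AR AL : IFun T) : ℝ → ℝ :=
  fun t => (AR.toFun T - AL.toFun T) - (AR.toFun t - AL.toFun t)

/-!
The Skorokhod conditions say that `A^{R,i}` can only increase where `φ(t, yⁱ(t)) = 0` and
`A^{L,i}` only where `ψ(t, yⁱ(t)) = 0`. Suppose `y¹(t₀) > y²(t₀)` and let `τ > t₀` be the first
time where `y¹ = y²` (it exists since `y¹(T) = y²(T) = 0`). On `(t₀, τ)` strict monotonicity gives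
`φ(t, y¹) > φ(t, y²) ≥ 0` and `ψ(t, y²) < ψ(t, y¹) ≤ 0`, so `A^{R,1}` and `A^{L,2}` are constant
on `[t₀, τ]`. Hence `y¹ - y²` can only increase from `t₀` to `τ`, contradicting
`0 = (y¹ - y²)(τ) < (y¹ - y²)(t₀)`. By symmetry `y¹ = y²`, and `A(0) = 0` gives `A¹ = A²`.
-/

theorem StieltjesFunction.eq_of_measure_Ioo_eq_zero (f : StieltjesFunction ℝ) {a b : ℝ}
    (hab : a ≤ b) (hb : ContinuousWithinAt f (Iic b) b) (h : f.measure (Ioo a b) = 0) :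
    f b = f a := by
  rw [f.measure_Ioo, hb.leftLim_eq, ENNReal.ofReal_eq_zero, sub_nonpos] at h
  exact le_antisymm h (f.mono hab)

theorem ae_eq_zero_of_setIntegral_eq_zero_of_nonneg {X : Type*} [TopologicalSpace X]
    [MeasurableSpace X] [OpensMeasurableSpace X] {μ : Measure X} [IsFiniteMeasureOnCompacts μ]
    {f : X → ℝ} {s : Set X} (hs : IsCompact s) (hsm : MeasurableSet s) (hf : ContinuousOn f s)
    (hf₀ : ∀ x ∈ s, 0 ≤ f x) (h : ∫ x in s, f x ∂μ = 0) :
    ∀ᵐ x ∂μ, x ∈ s → f x = 0 := by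
  have hf₀' : 0 ≤ᵐ[μ.restrict s] f := (ae_restrict_iff' hsm).2 (.of_forall hf₀)
  rw [setIntegral_eq_zero_iff_of_nonneg_ae hf₀' (hf.integrableOn_compact' hs hsm)] at h
  exact (ae_restrict_iff' hsm).1 h

theorem ae_eq_zero_of_setIntegral_eq_zero_of_nonpos {X : Type*} [TopologicalSpace X]
    [MeasurableSpace X] [OpensMeasurableSpace X] {μ : Measure X} [IsFiniteMeasureOnCompacts μ]
    {f : X → ℝ} {s : Set X} (hs : IsCompact s) (hsm : MeasurableSet s) (hf : ContinuousOn f s)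
    (hf₀ : ∀ x ∈ s, f x ≤ 0) (h : ∫ x in s, f x ∂μ = 0) :
    ∀ᵐ x ∂μ, x ∈ s → f x = 0 := by
  have hneg := ae_eq_zero_of_setIntegral_eq_zero_of_nonneg (μ := μ) (f := fun x => -f x) hs hsm
    hf.neg (fun x hx => neg_nonneg.2 (hf₀ x hx)) (by rw [integral_neg, h, neg_zero])
  exact hneg.mono fun x hx hxs => neg_eq_zero.1 (hx hxs)

theorem exists_first_zero_of_pos {f : ℝ → ℝ} {a b : ℝ} (hab : a ≤ b)
    (hf : ContinuousOn f (Icc a b)) (ha : 0 < f a) (hb : f b = 0) :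
    ∃ c ∈ Ioc a b, f c = 0 ∧ ∀ x ∈ Ico a c, 0 < f x := by
  have hZ : IsCompact (Icc a b ∩ f ⁻¹' {0}) := isCompact_Icc.of_isClosed_subset
    (hf.preimage_isClosed_of_isClosed isClosed_Icc isClosed_singleton) inter_subset_left
  obtain ⟨c, ⟨hc, hc₀ : f c = 0⟩, hc_min⟩ := hZ.exists_isLeast ⟨b, ⟨hab, le_rfl⟩, hb⟩
  have hac : a < c := hc.1.lt_of_ne (by rintro rfl; linarith)
  refine ⟨c, ⟨hac, hc.2⟩, hc₀, fun x hx => ?_⟩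
  by_contra! hx₀
  obtain ⟨d, hd, hd₀⟩ := intermediate_value_Icc' hx.1 (hf.mono (Icc_subset_Icc le_rfl
    (hx.2.le.trans hc.2))) ⟨hx₀, ha.le⟩
  have : c ≤ d := hc_min ⟨⟨hd.1, hd.2.trans (hx.2.le.trans hc.2)⟩, hd₀⟩
  linarith [hd.2, hx.2]

instance IFun.isLocallyFiniteMeasure {T : ℝ} (k : IFun T) : IsLocallyFiniteMeasure k.measure :=
  inferInstanceAs (IsLocallyFiniteMeasure k.stieltjes.measure)

theorem IFun.eq_of_measure_Ioo_eq_zero {T : ℝ} (k : IFun T) {a b : ℝ} (hab : a ≤ b)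
    (h : k.measure (Ioo a b) = 0) : k.toFun b = k.toFun a :=
  k.stieltjes.eq_of_measure_Ioo_eq_zero hab k.cont.continuousWithinAt h

theorem continuous_backRem {T : ℝ} (AR AL : IFun T) : Continuous (backRem T AR AL) :=
  continuous_const.sub (AR.cont.sub AL.cont)

theorem ae_eq_zero_of_skorokhod {T : ℝ} {φ ψ : ℝ → ℝ → ℝ}
    (hφc : ContinuousOn (fun p : ℝ × ℝ => φ p.1 p.2) (Icc 0 T ×ˢ univ))
    (hψc : ContinuousOn (fun p : ℝ × ℝ => ψ p.1 p.2) (Icc 0 T ×ˢ univ)) (AR AL : IFun T)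
    (hcon : ∀ t ∈ Icc (0 : ℝ) T, ψ t (backRem T AR AL t) ≤ 0 ∧ 0 ≤ φ t (backRem T AR AL t))
    (hskR : (∫ t in Icc 0 T, φ t (backRem T AR AL t) ∂AR.measure) = 0)
    (hskL : (∫ t in Icc 0 T, ψ t (backRem T AR AL t) ∂AL.measure) = 0) :
    (∀ᵐ t ∂AR.measure, t ∈ Icc 0 T → φ t (backRem T AR AL t) = 0) ∧
      ∀ᵐ t ∂AL.measure, t ∈ Icc 0 T → ψ t (backRem T AR AL t) = 0 := by
  have hgraph : ContinuousOn (fun t => (t, backRem T AR AL t)) (Icc 0 T) :=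
    (continuous_id.prodMk (continuous_backRem AR AL)).continuousOn
  have hmaps : MapsTo (fun t => (t, backRem T AR AL t)) (Icc 0 T) (Icc 0 T ×ˢ univ) :=
    fun _ ht => ⟨ht, mem_univ _⟩
  exact ⟨ae_eq_zero_of_setIntegral_eq_zero_of_nonneg isCompact_Icc measurableSet_Icc
      (hφc.comp hgraph hmaps) (fun t ht => (hcon t ht).2) hskR,
    ae_eq_zero_of_setIntegral_eq_zero_of_nonpos isCompact_Icc measurableSet_Icc
      (hψc.comp hgraph hmaps) (fun t ht => (hcon t ht).1) hskL⟩

theorem backRem_le_backRem {T : ℝ} {φ ψ : ℝ → ℝ → ℝ}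
    (hφm : ∀ t ∈ Icc (0 : ℝ) T, StrictMono (φ t)) (hψm : ∀ t ∈ Icc (0 : ℝ) T, StrictMono (ψ t))
    {AR₁ AL₁ AR₂ AL₂ : IFun T}
    (hψ₁ : ∀ t ∈ Icc (0 : ℝ) T, ψ t (backRem T AR₁ AL₁ t) ≤ 0)
    (hφ₂ : ∀ t ∈ Icc (0 : ℝ) T, 0 ≤ φ t (backRem T AR₂ AL₂ t))
    (hR₁ : ∀ᵐ t ∂AR₁.measure, t ∈ Icc 0 T → φ t (backRem T AR₁ AL₁ t) = 0)
    (hL₂ : ∀ᵐ t ∂AL₂.measure, t ∈ Icc 0 T → ψ t (backRem T AR₂ AL₂ t) = 0) :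
    ∀ t ∈ Icc (0 : ℝ) T, backRem T AR₁ AL₁ t ≤ backRem T AR₂ AL₂ t := by
  intro t₀ ht₀
  by_contra! hlt
  obtain ⟨τ, hτ, hτ₀, hpos⟩ := exists_first_zero_of_pos (f := fun t =>
      backRem T AR₁ AL₁ t - backRem T AR₂ AL₂ t) ht₀.2
    ((continuous_backRem AR₁ AL₁).sub (continuous_backRem AR₂ AL₂)).continuousOn
    (sub_pos.2 hlt) (by simp [backRem])
  have hIoo : ∀ t ∈ Ioo t₀ τ, t ∈ Icc 0 T ∧ backRem T AR₂ AL₂ t < backRem T AR₁ AL₁ t :=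
    fun t ht => ⟨⟨ht₀.1.trans ht.1.le, ht.2.le.trans hτ.2⟩, sub_pos.1 (hpos t ⟨ht.1.le, ht.2⟩)⟩
  have hR : AR₁.measure (Ioo t₀ τ) = 0 := by
    refine measure_mono_null (fun t ht => ?_) (ae_iff.1 hR₁)
    intro hφ₁
    obtain ⟨htT, hy⟩ := hIoo t ht
    linarith [hφm t htT hy, hφ₁ htT, hφ₂ t htT]
  have hL : AL₂.measure (Ioo t₀ τ) = 0 := by
    refine measure_mono_null (fun t ht => ?_) (ae_iff.1 hL₂)
    intro hψ₂
    obtain ⟨htT, hy⟩ := hIoo t ht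
    linarith [hψm t htT hy, hψ₂ htT, hψ₁ t htT]
  have hR_const := AR₁.eq_of_measure_Ioo_eq_zero hτ.1.le hR
  have hL_const := AL₂.eq_of_measure_Ioo_eq_zero hτ.1.le hL
  have hL₁_mono := AL₁.mono hτ.1.le
  have hR₂_mono := AR₂.mono hτ.1.le
  simp only [backRem] at hlt hτ₀
  linarith

theorem stmt8_general (T : ℝ) (φ ψ : ℝ → ℝ → ℝ)
    (hφc : ContinuousOn (fun p : ℝ × ℝ => φ p.1 p.2) (Icc 0 T ×ˢ univ))
    (hψc : ContinuousOn (fun p : ℝ × ℝ => ψ p.1 p.2) (Icc 0 T ×ˢ univ))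
    (hφm : ∀ t ∈ Icc (0 : ℝ) T, StrictMono (φ t))
    (hψm : ∀ t ∈ Icc (0 : ℝ) T, StrictMono (ψ t))
    (AR₁ AL₁ AR₂ AL₂ : IFun T)
    (hcon₁ : ∀ t ∈ Icc (0 : ℝ) T,
      ψ t (backRem T AR₁ AL₁ t) ≤ 0 ∧ 0 ≤ φ t (backRem T AR₁ AL₁ t))
    (hcon₂ : ∀ t ∈ Icc (0 : ℝ) T,
      ψ t (backRem T AR₂ AL₂ t) ≤ 0 ∧ 0 ≤ φ t (backRem T AR₂ AL₂ t))
    (hskR₁ : (∫ t in Icc 0 T, φ t (backRem T AR₁ AL₁ t) ∂AR₁.measure) = 0)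
    (hskL₁ : (∫ t in Icc 0 T, ψ t (backRem T AR₁ AL₁ t) ∂AL₁.measure) = 0)
    (hskR₂ : (∫ t in Icc 0 T, φ t (backRem T AR₂ AL₂ t) ∂AR₂.measure) = 0)
    (hskL₂ : (∫ t in Icc 0 T, ψ t (backRem T AR₂ AL₂ t) ∂AL₂.measure) = 0) :
    (∀ t ∈ Icc (0 : ℝ) T, backRem T AR₁ AL₁ t = backRem T AR₂ AL₂ t) ∧
      ∀ t ∈ Icc (0 : ℝ) T,
        AR₁.toFun t - AL₁.toFun t = AR₂.toFun t - AL₂.toFun t := by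
  obtain ⟨hR₁, hL₁⟩ := ae_eq_zero_of_skorokhod hφc hψc AR₁ AL₁ hcon₁ hskR₁ hskL₁
  obtain ⟨hR₂, hL₂⟩ := ae_eq_zero_of_skorokhod hφc hψc AR₂ AL₂ hcon₂ hskR₂ hskL₂
  have heq : ∀ t ∈ Icc (0 : ℝ) T, backRem T AR₁ AL₁ t = backRem T AR₂ AL₂ t := fun t ht =>
    le_antisymm
      (backRem_le_backRem hφm hψm (fun t ht => (hcon₁ t ht).1) (fun t ht => (hcon₂ t ht).2)
        hR₁ hL₂ t ht)
      (backRem_le_backRem hφm hψm (fun t ht => (hcon₂ t ht).1) (fun t ht => (hcon₁ t ht).2)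
        hR₂ hL₁ t ht)
  refine ⟨heq, fun t ht => ?_⟩
  have h₀ := heq 0 ⟨le_rfl, ht.1.trans ht.2⟩
  have ht' := heq t ht
  simp only [backRem, AR₁.zero_left 0 le_rfl, AL₁.zero_left 0 le_rfl,
    AR₂.zero_left 0 le_rfl, AL₂.zero_left 0 le_rfl] at h₀ ht'
  linarith

/-- uniqueness of the reflecting function: if, for `i = 1,2`,
`yⁱ(t) = Aⁱ(T) - Aⁱ(t)` with `Aⁱ = A^{R,i} - A^{L,i}` satisfies the constraints
`ψ(t,yⁱ(t)) ≤ 0 ≤ φ(t,yⁱ(t))` and the Skorokhod conditions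
`∫ φ(t,yⁱ(t)) dA^{R,i} = ∫ ψ(t,yⁱ(t)) dA^{L,i} = 0`, then `A¹ ≡ A²` on `[0,T]`. -/
theorem stmt8 (T : ℝ) (hT : 0 < T) (φ ψ : ℝ → ℝ → ℝ)
    (hφc : ContinuousOn (fun p : ℝ × ℝ => φ p.1 p.2) (Icc 0 T ×ˢ univ))
    (hψc : ContinuousOn (fun p : ℝ × ℝ => ψ p.1 p.2) (Icc 0 T ×ˢ univ))
    (hφm : ∀ t ∈ Icc (0 : ℝ) T, StrictMono (φ t))
    (hψm : ∀ t ∈ Icc (0 : ℝ) T, StrictMono (ψ t))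
    (AR₁ AL₁ AR₂ AL₂ : IFun T)
    (hcon₁ : ∀ t ∈ Icc (0 : ℝ) T,
      ψ t (backRem T AR₁ AL₁ t) ≤ 0 ∧ 0 ≤ φ t (backRem T AR₁ AL₁ t))
    (hcon₂ : ∀ t ∈ Icc (0 : ℝ) T,
      ψ t (backRem T AR₂ AL₂ t) ≤ 0 ∧ 0 ≤ φ t (backRem T AR₂ AL₂ t))
    (hskR₁ : (∫ t in Icc 0 T, φ t (backRem T AR₁ AL₁ t) ∂AR₁.measure) = 0)
    (hskL₁ : (∫ t in Icc 0 T, ψ t (backRem T AR₁ AL₁ t) ∂AL₁.measure) = 0)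
    (hskR₂ : (∫ t in Icc 0 T, φ t (backRem T AR₂ AL₂ t) ∂AR₂.measure) = 0)
    (hskL₂ : (∫ t in Icc 0 T, ψ t (backRem T AR₂ AL₂ t) ∂AL₂.measure) = 0) :
    (∀ t ∈ Icc (0 : ℝ) T, backRem T AR₁ AL₁ t = backRem T AR₂ AL₂ t) ∧
      ∀ t ∈ Icc (0 : ℝ) T,
        AR₁.toFun t - AL₁.toFun t = AR₂.toFun t - AL₂.toFun t :=
  stmt8_general T φ ψ hφc hψc hφm hψm AR₁ AL₁ AR₂ AL₂ hcon₁ hcon₂ hskR₁ hskL₁ hskR₂ hskL₂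
end

section
/- Let T > 0, let (Ω, F) be a measurable space and 𝒫 a nonempty collection of probability measures on it, with upper expectation Ê[X] := sup_{P∈𝒫} ∫ X dP. Let {Ỹ_t}_{t∈[0,T]} be a family of measurable functions Ỹ_t : Ω → ℝ, each integrable with respect to every P ∈ 𝒫 with Ê[Ỹ_t] finite. Let L, R : Ω × [0,T] × ℝ → ℝ be such that for every (t,x), the maps ω ↦ L(ω,t,Ỹ_t(ω) − Ê[Ỹ_t] + x) and ω ↦ R(ω,t,Ỹ_t(ω) − Ê[Ỹ_t] + x) are measurable, integrable with respect to every P ∈ 𝒫, and have finite upper expectation; define l(t,x) := Ê[L(·,t,Ỹ_t − Ê[Ỹ_t] + x)] and r(t,x) := Ê[R(·,t,Ỹ_t − Ê[Ỹ_t] + x)]. Set a := Ê[Ỹ_T] and s(t) := Ê[Ỹ_0] − Ê[Ỹ_t], assume s ∈ C[0,T], l ≤ r pointwise and l(T,a) ≤ 0 ≤ r(T,a), and suppose (x,k) is a solution of the backward Skorokhod problem BSP_l^r(s,a) with decomposition k = A^R − A^L, A^R, A^L ∈ I[0,T], ∫_0^T l(t,x(t)) dA^L(t) = ∫_0^T r(t,x(t))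 dA^R(t) = 0. Define Y_t(ω) := Ỹ_t(ω) + (k(T) − k(t)). Then for all t ∈ [0,T]: Ê[L(·,t,Y_t)] = l(t,x(t)) and Ê[R(·,t,Y_t)] = r(t,x(t)); consequently Ê[L(·,t,Y_t)] ≤ 0 ≤ Ê[R(·,t,Y_t)] for all t ∈ [0,T], and ∫_0^T Ê[R(·,t,Y_t)] dA^R(t) = 0 and ∫_0^T Ê[L(·,t,Y_t)] dA^L(t) = 0. -/
open MeasureTheory Set

/-- The upper expectation `Ê[X] = sup_{P ∈ Ps} ∫ X dP` over a family of
probability measures. -/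
noncomputable def upperExp {Ω : Type*} [MeasurableSpace Ω]
    (Ps : Set (MeasureTheory.Measure Ω)) (X : Ω → ℝ) : ℝ :=
  sSup ((fun P => ∫ ω, X ω ∂P) '' Ps)

/-! The equation of the backward Skorokhod problem gives `Y_t = Ỹ_t - Ê[Ỹ_t] + x(t)`, so
`Ê[L(·,t,Y_t)]` and `Ê[R(·,t,Y_t)]` are `l(t,x(t))` and `r(t,x(t))` by the very definition of
`l` and `r`; the mean constraints and the Skorokhod conditions for `Y` are then those of `(x,k)`. -/

theorem IsBSPSolution.eq_add_sub {T : ℝ} {l r : ℝ → ℝ → ℝ} {m x k : ℝ → ℝ}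
    (hsol : IsBSPSolution T l r (fun t => m 0 - m t) (m T) x k) {t : ℝ} (ht : t ∈ Icc 0 T) :
    x t = m t + (k T - k t) := by
  rw [hsol.eqn t ht]
  ring

theorem stmt9_general {Ω : Type*} [MeasurableSpace Ω] (T : ℝ)
    (Ps : Set (Measure Ω))
    (Yt : ℝ → Ω → ℝ)
    (L R : Ω → ℝ → ℝ → ℝ)
    (l r : ℝ → ℝ → ℝ)
    (hl : ∀ t x : ℝ, l t x = upperExp Ps fun ω => L ω t (Yt t ω - upperExp Ps (Yt t) + x))
    (hr : ∀ t x : ℝ, r t x = upperExp Ps fun ω => R ω t (Yt t ω - upperExp Ps (Yt t) + x))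
    (a : ℝ) (ha : a = upperExp Ps (Yt T))
    (s : ℝ → ℝ) (hsdef : ∀ t : ℝ, s t = upperExp Ps (Yt 0) - upperExp Ps (Yt t))
    (x k : ℝ → ℝ) (hsol : IsBSPSolution T l r s a x k)
    (AR AL : IFun T)
    (hskL : (∫ t in Icc 0 T, l t (x t) ∂AL.measure) = 0)
    (hskR : (∫ t in Icc 0 T, r t (x t) ∂AR.measure) = 0)
    (Y : ℝ → Ω → ℝ) (hY : ∀ t ω, Y t ω = Yt t ω + (k T - k t)) :
    (∀ t ∈ Icc (0 : ℝ) T,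
      upperExp Ps (fun ω => L ω t (Y t ω)) = l t (x t) ∧
      upperExp Ps (fun ω => R ω t (Y t ω)) = r t (x t) ∧
      upperExp Ps (fun ω => L ω t (Y t ω)) ≤ 0 ∧
      0 ≤ upperExp Ps (fun ω => R ω t (Y t ω))) ∧
    (∫ t in Icc 0 T, upperExp Ps (fun ω => R ω t (Y t ω)) ∂AR.measure) = 0 ∧
    (∫ t in Icc 0 T, upperExp Ps (fun ω => L ω t (Y t ω)) ∂AL.measure) = 0 := by
  obtain rfl : s = fun t => upperExp Ps (Yt 0) - upperExp Ps (Yt t) := funext hsdef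
  subst ha
  have hYx : ∀ t ∈ Icc 0 T, Y t = fun ω => Yt t ω - upperExp Ps (Yt t) + x t := by
    intro t ht
    funext ω
    rw [hY, hsol.eq_add_sub (m := fun t => upperExp Ps (Yt t)) ht]
    ring
  have hLx : ∀ t ∈ Icc 0 T, upperExp Ps (fun ω => L ω t (Y t ω)) = l t (x t) := by
    intro t ht
    rw [hYx t ht, hl]
  have hRx : ∀ t ∈ Icc 0 T, upperExp Ps (fun ω => R ω t (Y t ω)) = r t (x t) := by
    intro t ht
    rw [hYx t ht, hr]
  refine ⟨fun t ht => ⟨hLx t ht, hRx t ht, ?_, ?_⟩, ?_, ?_⟩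
  · exact (hLx t ht).trans_le (hsol.lower t ht)
  · exact (hsol.upper t ht).trans_eq (hRx t ht).symm
  · rw [setIntegral_congr_fun measurableSet_Icc hRx, hskR]
  · rw [setIntegral_congr_fun measurableSet_Icc hLx, hskL]

/-- construction of the solution of the doubly mean reflected
equation from the backward Skorokhod problem: with
`l(t,x) = Ê[L(·,t,Ỹ_t - Ê[Ỹ_t] + x)]`, `r(t,x) = Ê[R(·,t,Ỹ_t - Ê[Ỹ_t] + x)]`,
`a = Ê[Ỹ_T]`, `s(t) = Ê[Ỹ_0] - Ê[Ỹ_t]`, if `(x,k)` solves `BSP_l^r(s,a)` with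
decomposition `k = A^R - A^L`, then `Y_t = Ỹ_t + (k(T) - k(t))` satisfies
`Ê[L(·,t,Y_t)] = l(t,x(t))`, `Ê[R(·,t,Y_t)] = r(t,x(t))`, the mean constraints
`Ê[L(·,t,Y_t)] ≤ 0 ≤ Ê[R(·,t,Y_t)]` and the Skorokhod conditions
`∫ Ê[R(·,t,Y_t)] dA^R = ∫ Ê[L(·,t,Y_t)] dA^L = 0`. -/
theorem stmt9 {Ω : Type*} [MeasurableSpace Ω] (T : ℝ) (hT : 0 < T)
    (Ps : Set (Measure Ω)) (hne : Ps.Nonempty)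
    (hprob : ∀ P ∈ Ps, IsProbabilityMeasure P)
    (Yt : ℝ → Ω → ℝ)
    (hmeas : ∀ t ∈ Icc (0 : ℝ) T, Measurable (Yt t))
    (hint : ∀ t ∈ Icc (0 : ℝ) T, ∀ P ∈ Ps, Integrable (Yt t) P)
    (hbdd : ∀ t ∈ Icc (0 : ℝ) T, BddAbove ((fun P => ∫ ω, Yt t ω ∂P) '' Ps))
    (L R : Ω → ℝ → ℝ → ℝ)
    (hmeasL : ∀ t ∈ Icc (0 : ℝ) T, ∀ x : ℝ,
      Measurable fun ω => L ω t (Yt t ω - upperExp Ps (Yt t) + x))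
    (hmeasR : ∀ t ∈ Icc (0 : ℝ) T, ∀ x : ℝ,
      Measurable fun ω => R ω t (Yt t ω - upperExp Ps (Yt t) + x))
    (hintL : ∀ t ∈ Icc (0 : ℝ) T, ∀ x : ℝ, ∀ P ∈ Ps,
      Integrable (fun ω => L ω t (Yt t ω - upperExp Ps (Yt t) + x)) P)
    (hintR : ∀ t ∈ Icc (0 : ℝ) T, ∀ x : ℝ, ∀ P ∈ Ps,
      Integrable (fun ω => R ω t (Yt t ω - upperExp Ps (Yt t) + x)) P)
    (hbddL : ∀ t ∈ Icc (0 : ℝ) T, ∀ x : ℝ,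
      BddAbove ((fun P => ∫ ω, L ω t (Yt t ω - upperExp Ps (Yt t) + x) ∂P) '' Ps))
    (hbddR : ∀ t ∈ Icc (0 : ℝ) T, ∀ x : ℝ,
      BddAbove ((fun P => ∫ ω, R ω t (Yt t ω - upperExp Ps (Yt t) + x) ∂P) '' Ps))
    (l r : ℝ → ℝ → ℝ)
    (hl : ∀ t x : ℝ, l t x = upperExp Ps fun ω => L ω t (Yt t ω - upperExp Ps (Yt t) + x))
    (hr : ∀ t x : ℝ, r t x = upperExp Ps fun ω => R ω t (Yt t ω - upperExp Ps (Yt t) + x))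
    (a : ℝ) (ha : a = upperExp Ps (Yt T))
    (s : ℝ → ℝ) (hsdef : ∀ t : ℝ, s t = upperExp Ps (Yt 0) - upperExp Ps (Yt t))
    (hscont : ContinuousOn s (Icc 0 T))
    (hlr : ∀ t ∈ Icc (0 : ℝ) T, ∀ x : ℝ, l t x ≤ r t x)
    (hla : l T a ≤ 0) (hra : 0 ≤ r T a)
    (x k : ℝ → ℝ) (hsol : IsBSPSolution T l r s a x k)
    (AR AL : IFun T)
    (hdecomp : ∀ t ∈ Icc (0 : ℝ) T, k t = AR.toFun t - AL.toFun t)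
    (hskL : (∫ t in Icc 0 T, l t (x t) ∂AL.measure) = 0)
    (hskR : (∫ t in Icc 0 T, r t (x t) ∂AR.measure) = 0)
    (Y : ℝ → Ω → ℝ) (hY : ∀ t ω, Y t ω = Yt t ω + (k T - k t)) :
    (∀ t ∈ Icc (0 : ℝ) T,
      upperExp Ps (fun ω => L ω t (Y t ω)) = l t (x t) ∧
      upperExp Ps (fun ω => R ω t (Y t ω)) = r t (x t) ∧
      upperExp Ps (fun ω => L ω t (Y t ω)) ≤ 0 ∧
      0 ≤ upperExp Ps (fun ω => R ω t (Y t ω))) ∧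
    (∫ t in Icc 0 T, upperExp Ps (fun ω => R ω t (Y t ω)) ∂AR.measure) = 0 ∧
    (∫ t in Icc 0 T, upperExp Ps (fun ω => L ω t (Y t ω)) ∂AL.measure) = 0 :=
  stmt9_general T Ps Yt L R l r hl hr a ha s hsdef x k hsol AR AL hskL hskR Y hY
end

section
/- Let T > 0, let (Ω, F) be a measurable space and 𝒫 a nonempty collection of probability measures on it, with upper expectation Ê[X] := sup_{P∈𝒫} ∫ X dP. Let L, R : Ω × [0,T] × ℝ → ℝ satisfy |L(ω,t,x) − L(ω,t,y)| ≤ C|x − y| and |R(ω,t,x) − R(ω,t,y)| ≤ C|x − y| for all ω, t, x, y, where C > 0. For i = 1, 2, let {Ỹ^i_t}_{t∈[0,T]} be a family of measurable functions Ω → ℝ, each integrable with respect to every P ∈ 𝒫, with Ê[Ỹ^i_t] finite and sup_{t∈[0,T]} Ê[|Ỹ^1_t − Ỹ^2_t|] < ∞; define a^i := Ê[Ỹ^i_T], s^i(t) := Ê[Ỹ^i_0] − Ê[Ỹ^i_t], l^i(t,x) := Ê[L(·,t,Ỹ^i_t − Ê[Ỹ^i_t] + x)] and r^i(t,x) :=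 Ê[R(·,t,Ỹ^i_t − Ê[Ỹ^i_t] + x)], assumed to be finite for all (t,x). Assume s^i ∈ C[0,T], that l^i, r^i satisfy Assumption (A) with constants 0 < c < C, that l^i(T,a^i) ≤ 0 ≤ r^i(T,a^i), and let (x^i, A^i) be a solution of the backward Skorokhod problem BSP_{l^i}^{r^i}(s^i, a^i). Then there exists a constant K depending only on c and C such that sup_{t∈[0,T]} |A^1(t) − A^2(t)| ≤ K · sup_{t∈[0,T]} Ê[|Ỹ^1_t − Ỹ^2_t|]. -/
open MeasureTheory Set

/-!
Write `E = 2CD`. Since `L` and `R` are `C`-Lipschitz and `Ê[|Ỹ¹_t - Ỹ²_t|] ≤ D` (hence also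
`|Ê[Ỹ¹_t] - Ê[Ỹ²_t]| ≤ D`), the boundaries of the two problems differ by at most `E` under every
`P` for which both integrals exist. This is enough to transfer signs: where `l¹(t, ·)` is negative,
`l²(t, ·) ≤ E`, and likewise for `r` and with the roles of the problems exchanged. As the
boundaries have slope at least `c`, a gap `x₁ - x₂ > E / c` forces `r¹(t, x₁) > 0` and
`l²(t, x₂) < 0`, so the Skorokhod conditions keep `A¹` nonincreasing and `A²` nondecreasing while
the gap persists. Following the gap from any `t₀` to the first time it has closed (it is closed at `T`,
where `xⁱ = aⁱ`) bounds `x₁ - x₂` by `E / c + 3D`. By symmetry `|x₁ - x₂| ≤ E / c + 3D`, and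
`A¹ - A²` is read off from `x₁ - x₂` and the free parts `aⁱ + sⁱ(T) - sⁱ(t)`.
-/

lemma ContinuousOn.exists_first_le {φ : ℝ → ℝ} {a b B : ℝ} (hab : a ≤ b)
    (hφ : ContinuousOn φ (Icc a b)) (hb : φ b ≤ B) :
    ∃ t ∈ Icc a b, φ t ≤ B ∧ ∀ u ∈ Ico a t, B < φ u := by
  set S := Icc a b ∩ φ ⁻¹' Iic B
  have hSbdd : BddBelow S := ⟨a, fun u hu => hu.1.1⟩
  obtain ⟨hmem, hle⟩ := (hφ.preimage_isClosed_of_isClosed isClosed_Icc isClosed_Iic).csInf_mem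
    ⟨b, ⟨hab, le_rfl⟩, hb⟩ hSbdd
  refine ⟨sInf S, hmem, hle, fun u hu => ?_⟩
  by_contra! h
  exact (csInf_le hSbdd ⟨⟨hu.1, hu.2.le.trans hmem.2⟩, h⟩).not_gt hu.2

lemma ContinuousOn.comp_of_lipschitz {f : ℝ → ℝ → ℝ} {x : ℝ → ℝ} {s : Set ℝ} {C : ℝ}
    (hf : ∀ y, ContinuousOn (fun u => f u y) s)
    (hlip : ∀ u ∈ s, ∀ y z, |f u y - f u z| ≤ C * |y - z|) (hx : ContinuousOn x s) :
    ContinuousOn (fun u => f u (x u)) s := by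
  have hprod : ContinuousOn (fun p : ℝ × ℝ => f p.1 p.2) (s ×ˢ univ) :=
    continuousOn_prod_of_continuousOn_lipschitzOnWith' _ (Real.toNNReal C)
      (fun u hu => (LipschitzOnWith.of_dist_le' fun y _ z _ => hlip u hu y z))
      (fun y _ => hf y)
  exact hprod.comp (continuousOn_id.prodMk hx) fun u hu => ⟨hu, mem_univ _⟩

lemma mul_sub_le_sub_of_monotone {f : ℝ → ℝ} {c x y : ℝ} (hf : Monotone f)
    (hlip : c * |y - x| ≤ |f y - f x|) (hxy : x ≤ y) : c * (y - x) ≤ f y - f x := by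
  rwa [abs_of_nonneg (sub_nonneg.2 hxy), abs_of_nonneg (sub_nonneg.2 (hf hxy))] at hlip

section SignTransfer

variable {f₁ f₂ : ℝ → ℝ} {c E x₁ x₂ : ℝ}

lemma pos_of_sign_transfer (hc : 0 < c) (hE : 0 ≤ E) (hf₁ : StrictMono f₁)
    (hf₂ : ∀ x y, x ≤ y → c * (y - x) ≤ f₂ y - f₂ x) (htr : ∀ y, f₁ y < 0 → f₂ y ≤ E)
    (hgap : x₂ + E / c < x₁) (h₂ : 0 ≤ f₂ x₂) : 0 < f₁ x₁ := by
  obtain ⟨y, hy₂, hy₁⟩ := exists_between hgap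
  have hslope : E < c * (y - x₂) := by rw [← div_lt_iff₀' hc]; linarith
  have hy : 0 ≤ f₁ y := by
    by_contra! h
    linarith [htr y h, hf₂ x₂ y (by linarith [div_nonneg hE hc.le])]
  exact hy.trans_lt (hf₁ hy₁)

lemma neg_of_sign_transfer (hc : 0 < c) (hE : 0 ≤ E) (hf₁ : StrictMono f₁)
    (hf₂ : ∀ x y, x ≤ y → c * (y - x) ≤ f₂ y - f₂ x) (htr : ∀ y, f₁ y < 0 → f₂ y ≤ E)
    (hgap : x₂ + E / c < x₁) (h₁ : f₁ x₁ ≤ 0) : f₂ x₂ < 0 := by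
  obtain ⟨y, hy₂, hy₁⟩ := exists_between hgap
  have hslope : E < c * (y - x₂) := by rw [← div_lt_iff₀' hc]; linarith
  linarith [htr y ((hf₁ hy₁).trans_le h₁), hf₂ x₂ y (by linarith [div_nonneg hE hc.le])]

end SignTransfer

namespace AssumptionA

variable {T c C : ℝ} {l r : ℝ → ℝ → ℝ}

lemma l_slope (hA : AssumptionA T c C l r) {t : ℝ} (ht : t ∈ Icc 0 T) {x y : ℝ} (hxy : x ≤ y) :
    c * (y - x) ≤ l t y - l t x :=
  mul_sub_le_sub_of_monotone (hA.l_mono t ht).monotone (hA.l_lip t ht y x).1 hxy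

lemma r_slope (hA : AssumptionA T c C l r) {t : ℝ} (ht : t ∈ Icc 0 T) {x y : ℝ} (hxy : x ≤ y) :
    c * (y - x) ≤ r t y - r t x :=
  mul_sub_le_sub_of_monotone (hA.r_mono t ht).monotone (hA.r_lip t ht y x).1 hxy

lemma continuousOn_l_comp (hA : AssumptionA T c C l r) {x : ℝ → ℝ}
    (hx : ContinuousOn x (Icc 0 T)) : ContinuousOn (fun u => l u (x u)) (Icc 0 T) :=
  hx.comp_of_lipschitz hA.l_cont fun u hu y z => (hA.l_lip u hu y z).2

lemma continuousOn_r_comp (hA : AssumptionA T c C l r) {x : ℝ → ℝ}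
    (hx : ContinuousOn x (Icc 0 T)) : ContinuousOn (fun u => r u (x u)) (Icc 0 T) :=
  hx.comp_of_lipschitz hA.r_cont fun u hu y z => (hA.r_lip u hu y z).2

end AssumptionA

namespace IFun

variable {T : ℝ}

lemma measure_Ioo (k : IFun T) (a b : ℝ) :
    k.measure (Ioo a b) = ENNReal.ofReal (k.toFun b - k.toFun a) := by
  have hleft : Function.leftLim k.stieltjes b = k.toFun b :=
    (Monotone.continuousWithinAt_Iio_iff_leftLim_eq k.mono).1 k.cont.continuousWithinAt
  rw [IFun.measure, StieltjesFunction.measure_Ioo, hleft]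
  rfl

lemma toFun_eq_of_setIntegral_eq_zero (k : IFun T) {g : ℝ → ℝ}
    (hg : IntegrableOn g (Icc 0 T) k.measure) (hg0 : ∀ u ∈ Icc 0 T, 0 ≤ g u)
    (hint : ∫ u in Icc 0 T, g u ∂k.measure = 0) {t₀ t₁ : ℝ} (h0 : 0 ≤ t₀) (h01 : t₀ ≤ t₁)
    (h1T : t₁ ≤ T) (hpos : ∀ u ∈ Ioo t₀ t₁, 0 < g u) : k.toFun t₁ = k.toFun t₀ := by
  have hnull : k.measure (Function.support g ∩ Icc 0 T) = 0 := by
    by_contra h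
    have := (setIntegral_pos_iff_support_of_nonneg_ae
      ((ae_restrict_iff' measurableSet_Icc).2 (ae_of_all _ hg0)) hg).2
      (pos_iff_ne_zero.2 h)
    exact this.ne' hint
  have hsub : Ioo t₀ t₁ ⊆ Function.support g ∩ Icc 0 T := fun u hu =>
    ⟨(hpos u hu).ne', h0.trans hu.1.le, hu.2.le.trans h1T⟩
  have hIoo : k.measure (Ioo t₀ t₁) = 0 := measure_mono_null hsub hnull
  rw [measure_Ioo, ENNReal.ofReal_eq_zero] at hIoo
  exact le_antisymm (by linarith) (k.mono h01)

end IFun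

namespace IsBSPSolution

variable {T c C E d : ℝ} {l r l₁ r₁ l₂ r₂ : ℝ → ℝ → ℝ} {s s₁ s₂ : ℝ → ℝ} {a a₁ a₂ : ℝ}
  {x k x₁ k₁ x₂ k₂ : ℝ → ℝ}

lemma k_le_of_r_pos (h : IsBSPSolution T l r s a x k)
    (hr : ContinuousOn (fun u => r u (x u)) (Icc 0 T)) {t₀ t₁ : ℝ} (h0 : 0 ≤ t₀)
    (h01 : t₀ ≤ t₁) (h1T : t₁ ≤ T) (hpos : ∀ u ∈ Ioo t₀ t₁, 0 < r u (x u)) :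
    k t₁ ≤ k t₀ := by
  obtain ⟨kr, kl, hk, -, hint⟩ := h.decomp
  have hflat := kr.toFun_eq_of_setIntegral_eq_zero (hr.integrableOn_compact isCompact_Icc)
    h.upper hint h0 h01 h1T hpos
  rw [hk t₀ ⟨h0, h01.trans h1T⟩, hk t₁ ⟨h0.trans h01, h1T⟩, hflat]
  linarith [kl.mono h01]

lemma k_le_of_l_neg (h : IsBSPSolution T l r s a x k)
    (hl : ContinuousOn (fun u => l u (x u)) (Icc 0 T)) {t₀ t₁ : ℝ} (h0 : 0 ≤ t₀)
    (h01 : t₀ ≤ t₁) (h1T : t₁ ≤ T) (hneg : ∀ u ∈ Ioo t₀ t₁, l u (x u) < 0) :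
    k t₀ ≤ k t₁ := by
  obtain ⟨kr, kl, hk, hint, -⟩ := h.decomp
  have hflat := kl.toFun_eq_of_setIntegral_eq_zero (g := fun u => -l u (x u))
    (hl.neg.integrableOn_compact isCompact_Icc) (fun u hu => neg_nonneg.2 (h.lower u hu))
    (by rw [integral_neg, hint, neg_zero]) h0 h01 h1T fun u hu => neg_pos.2 (hneg u hu)
  rw [hk t₀ ⟨h0, h01.trans h1T⟩, hk t₁ ⟨h0.trans h01, h1T⟩, hflat]
  linarith [kr.mono h01]

lemma sub_le_of_sign_transfer (hsol₁ : IsBSPSolution T l₁ r₁ s₁ a₁ x₁ k₁)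
    (hsol₂ : IsBSPSolution T l₂ r₂ s₂ a₂ x₂ k₂) (hc : 0 < c) (hE : 0 ≤ E)
    (hA₁ : AssumptionA T c C l₁ r₁) (hA₂ : AssumptionA T c C l₂ r₂)
    (hl : ∀ u ∈ Icc 0 T, ∀ y, l₁ u y < 0 → l₂ u y ≤ E)
    (hr : ∀ u ∈ Icc 0 T, ∀ y, r₁ u y < 0 → r₂ u y ≤ E)
    (hv : ∀ u ∈ Icc 0 T, |(a₁ + s₁ T - s₁ u) - (a₂ + s₂ T - s₂ u)| ≤ d)
    {t₀ : ℝ} (ht₀ : t₀ ∈ Icc 0 T) : x₁ t₀ - x₂ t₀ ≤ E / c + 3 * d := by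
  have hT : T ∈ Icc 0 T := ⟨ht₀.1.trans ht₀.2, le_rfl⟩
  have hd : 0 ≤ d := (abs_nonneg _).trans (hv T hT)
  have hEc : 0 ≤ E / c := div_nonneg hE hc.le
  have hxT : x₁ T - x₂ T ≤ E / c + d := by
    linarith [hsol₁.eqn T hT, hsol₂.eqn T hT, (abs_le.1 (hv T hT)).2]
  obtain ⟨t₁, ht₁, hle, hgt⟩ := ContinuousOn.exists_first_le (φ := fun u => x₁ u - x₂ u) ht₀.2
    ((hsol₁.x_cont.sub hsol₂.x_cont).mono (Icc_subset_Icc_left ht₀.1)) hxT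
  have ht₁' : t₁ ∈ Icc 0 T := ⟨ht₀.1.trans ht₁.1, ht₁.2⟩
  have hmem : ∀ u ∈ Ioo t₀ t₁, u ∈ Icc 0 T := fun u hu => ⟨ht₀.1.trans hu.1.le, hu.2.le.trans ht₁.2⟩
  have hgap : ∀ u ∈ Ioo t₀ t₁, x₂ u + E / c < x₁ u := fun u hu => by
    linarith [hgt u ⟨hu.1.le, hu.2⟩]
  have hk₁ : k₁ t₁ ≤ k₁ t₀ := hsol₁.k_le_of_r_pos (hA₁.continuousOn_r_comp hsol₁.x_cont) ht₀.1
    ht₁.1 ht₁.2 fun u hu => pos_of_sign_transfer hc hE (hA₁.r_mono u (hmem u hu))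
      (fun _ _ => hA₂.r_slope (hmem u hu)) (hr u (hmem u hu)) (hgap u hu)
      (hsol₂.upper u (hmem u hu))
  have hk₂ : k₂ t₀ ≤ k₂ t₁ := hsol₂.k_le_of_l_neg (hA₂.continuousOn_l_comp hsol₂.x_cont) ht₀.1
    ht₁.1 ht₁.2 fun u hu => neg_of_sign_transfer hc hE (hA₁.l_mono u (hmem u hu))
      (fun _ _ => hA₂.l_slope (hmem u hu)) (hl u (hmem u hu)) (hgap u hu)
      (hsol₁.lower u (hmem u hu))
  linarith [hsol₁.eqn t₀ ht₀, hsol₁.eqn t₁ ht₁', hsol₂.eqn t₀ ht₀, hsol₂.eqn t₁ ht₁',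
    (abs_le.1 (hv t₀ ht₀)).2, (abs_le.1 (hv t₁ ht₁')).1]

lemma abs_k_sub_le (hsol₁ : IsBSPSolution T l₁ r₁ s₁ a₁ x₁ k₁)
    (hsol₂ : IsBSPSolution T l₂ r₂ s₂ a₂ x₂ k₂) {M : ℝ}
    (hx : ∀ u ∈ Icc 0 T, |x₁ u - x₂ u| ≤ M)
    (hv : ∀ u ∈ Icc 0 T, |(a₁ + s₁ T - s₁ u) - (a₂ + s₂ T - s₂ u)| ≤ d)
    {t : ℝ} (ht : t ∈ Icc 0 T) : |k₁ t - k₂ t| ≤ 2 * M + 2 * d := by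
  have h0 : (0 : ℝ) ∈ Icc 0 T := ⟨le_rfl, ht.1.trans ht.2⟩
  rw [abs_le]
  constructor <;> linarith [hsol₁.eqn 0 h0, hsol₁.eqn t ht, hsol₂.eqn 0 h0, hsol₂.eqn t ht,
    hsol₁.k_zero, hsol₂.k_zero, (abs_le.1 (hx 0 h0)).1, (abs_le.1 (hx 0 h0)).2,
    (abs_le.1 (hx t ht)).1, (abs_le.1 (hx t ht)).2, (abs_le.1 (hv 0 h0)).1,
    (abs_le.1 (hv 0 h0)).2, (abs_le.1 (hv t ht)).1, (abs_le.1 (hv t ht)).2]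

lemma abs_sub_le_of_sign_transfer (hsol₁ : IsBSPSolution T l₁ r₁ s₁ a₁ x₁ k₁)
    (hsol₂ : IsBSPSolution T l₂ r₂ s₂ a₂ x₂ k₂) (hc : 0 < c) (hE : 0 ≤ E)
    (hA₁ : AssumptionA T c C l₁ r₁) (hA₂ : AssumptionA T c C l₂ r₂)
    (hl₁₂ : ∀ u ∈ Icc 0 T, ∀ y, l₁ u y < 0 → l₂ u y ≤ E)
    (hl₂₁ : ∀ u ∈ Icc 0 T, ∀ y, l₂ u y < 0 → l₁ u y ≤ E)
    (hr₁₂ : ∀ u ∈ Icc 0 T, ∀ y, r₁ u y < 0 → r₂ u y ≤ E)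
    (hr₂₁ : ∀ u ∈ Icc 0 T, ∀ y, r₂ u y < 0 → r₁ u y ≤ E)
    (hv : ∀ u ∈ Icc 0 T, |(a₁ + s₁ T - s₁ u) - (a₂ + s₂ T - s₂ u)| ≤ d)
    {t : ℝ} (ht : t ∈ Icc 0 T) : |x₁ t - x₂ t| ≤ E / c + 3 * d :=
  abs_sub_le_iff.2
    ⟨hsol₁.sub_le_of_sign_transfer hsol₂ hc hE hA₁ hA₂ hl₁₂ hr₁₂ hv ht,
      hsol₂.sub_le_of_sign_transfer hsol₁ hc hE hA₂ hA₁ hl₂₁ hr₂₁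
        (fun u hu => abs_sub_comm (a₁ + s₁ T - s₁ u) _ ▸ hv u hu) ht⟩

end IsBSPSolution

section UpperExpectation

variable {Ω : Type*} [MeasurableSpace Ω] {Ps : Set (Measure Ω)} {X Y : Ω → ℝ}

lemma le_upperExp (hB : BddAbove ((fun P => ∫ ω, X ω ∂P) '' Ps)) {P : Measure Ω}
    (hP : P ∈ Ps) : ∫ ω, X ω ∂P ≤ upperExp Ps X :=
  le_csSup hB ⟨P, hP, rfl⟩

lemma upperExp_le (hne : Ps.Nonempty) {M : ℝ} (h : ∀ P ∈ Ps, ∫ ω, X ω ∂P ≤ M) :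
    upperExp Ps X ≤ M :=
  csSup_le (hne.image _) (forall_mem_image.2 h)

lemma abs_upperExp_sub_le (hne : Ps.Nonempty) (hX : BddAbove ((fun P => ∫ ω, X ω ∂P) '' Ps))
    (hY : BddAbove ((fun P => ∫ ω, Y ω ∂P) '' Ps)) {D : ℝ}
    (h : ∀ P ∈ Ps, |∫ ω, X ω ∂P - ∫ ω, Y ω ∂P| ≤ D) :
    |upperExp Ps X - upperExp Ps Y| ≤ D := by
  rw [abs_sub_le_iff]
  constructor
  · have := upperExp_le hne fun P hP =>
      show ∫ ω, X ω ∂P ≤ upperExp Ps Y + D by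
        linarith [(abs_le.1 (h P hP)).2, le_upperExp hY hP]
    linarith
  · have := upperExp_le hne fun P hP =>
      show ∫ ω, Y ω ∂P ≤ upperExp Ps X + D by
        linarith [(abs_le.1 (h P hP)).1, le_upperExp hX hP]
    linarith

/-- Nothing is assumed about measurability, so `∫ F₂ ∂P` may be the junk value `0`: this is why
the bound is `E` rather than `upperExp Ps F₁ + E`. The sign condition makes `F₁` integrable
for every `P`. -/
lemma upperExp_le_of_upperExp_neg {F₁ F₂ : Ω → ℝ} {E : ℝ} (hE : 0 ≤ E)
    (hB : BddAbove ((fun P => ∫ ω, F₁ ω ∂P) '' Ps))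
    (h : ∀ P ∈ Ps, Integrable F₁ P → Integrable F₂ P → ∫ ω, F₂ ω ∂P ≤ ∫ ω, F₁ ω ∂P + E)
    (hneg : upperExp Ps F₁ < 0) : upperExp Ps F₂ ≤ E := by
  refine Real.sSup_le (forall_mem_image.2 fun P hP => ?_) hE
  by_cases h₂ : Integrable F₂ P
  · have hle := le_upperExp hB hP
    have h₁ : Integrable F₁ P := by
      by_contra h₁
      rw [integral_undef h₁] at hle
      linarith
    linarith [h P hP h₁ h₂]
  · rw [integral_undef h₂]
    exact hE

lemma abs_integral_comp_sub_le {P : Measure Ω} [IsProbabilityMeasure P] {G : Ω → ℝ → ℝ}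
    {C : ℝ} (hC : 0 ≤ C) (hG : ∀ ω x y, |G ω x - G ω y| ≤ C * |x - y|)
    (hX : Integrable X P) (hY : Integrable Y P) {m₁ m₂ y : ℝ}
    (h₁ : Integrable (fun ω => G ω (X ω - m₁ + y)) P)
    (h₂ : Integrable (fun ω => G ω (Y ω - m₂ + y)) P) :
    |∫ ω, G ω (X ω - m₁ + y) ∂P - ∫ ω, G ω (Y ω - m₂ + y) ∂P|
      ≤ C * (∫ ω, |X ω - Y ω| ∂P + |m₁ - m₂|) := by
  have hpt : ∀ ω, |G ω (X ω - m₁ + y) - G ω (Y ω - m₂ + y)| ≤ C * (|X ω - Y ω| + |m₁ - m₂|) :=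
    fun ω => (hG ω _ _).trans <| mul_le_mul_of_nonneg_left
      (by rw [show X ω - m₁ + y - (Y ω - m₂ + y) = X ω - Y ω - (m₁ - m₂) by ring]
          exact abs_sub _ _) hC
  have hXY : Integrable (fun ω => |X ω - Y ω|) P := (hX.sub hY).abs
  rw [← integral_sub h₁ h₂]
  calc |∫ ω, G ω (X ω - m₁ + y) - G ω (Y ω - m₂ + y) ∂P|
      ≤ ∫ ω, |G ω (X ω - m₁ + y) - G ω (Y ω - m₂ + y)| ∂P := abs_integral_le_integral_abs
    _ ≤ ∫ ω, C * (|X ω - Y ω| + |m₁ - m₂|) ∂P :=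
        integral_mono (h₁.sub h₂).abs ((hXY.add (integrable_const _)).const_mul C) hpt
    _ = C * (∫ ω, |X ω - Y ω| ∂P + |m₁ - m₂|) := by
        rw [integral_const_mul, integral_add hXY (integrable_const _), integral_const]
        simp

lemma sign_transfer_of_lipschitz (hprob : ∀ P ∈ Ps, IsProbabilityMeasure P) {I : Set ℝ}
    {C D : ℝ} (hC : 0 ≤ C) {G : Ω → ℝ → ℝ → ℝ}
    (hG : ∀ ω, ∀ t ∈ I, ∀ x y, |G ω t x - G ω t y| ≤ C * |x - y|) {Y₁ Y₂ : ℝ → Ω → ℝ}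
    (hY : ∀ t ∈ I, ∀ P ∈ Ps, Integrable (Y₁ t) P ∧ Integrable (Y₂ t) P)
    (hYD : ∀ t ∈ I, ∀ P ∈ Ps, ∫ ω, |Y₁ t ω - Y₂ t ω| ∂P ≤ D)
    (hmean : ∀ t ∈ I, |upperExp Ps (Y₁ t) - upperExp Ps (Y₂ t)| ≤ D) {f₁ f₂ : ℝ → ℝ → ℝ}
    (hf₁ : ∀ t x, f₁ t x = upperExp Ps fun ω => G ω t (Y₁ t ω - upperExp Ps (Y₁ t) + x))
    (hf₂ : ∀ t x, f₂ t x = upperExp Ps fun ω => G ω t (Y₂ t ω - upperExp Ps (Y₂ t) + x))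
    (hB₁ : ∀ t x,
      BddAbove ((fun P => ∫ ω, G ω t (Y₁ t ω - upperExp Ps (Y₁ t) + x) ∂P) '' Ps))
    (hB₂ : ∀ t x,
      BddAbove ((fun P => ∫ ω, G ω t (Y₂ t ω - upperExp Ps (Y₂ t) + x) ∂P) '' Ps)) :
    (∀ t ∈ I, ∀ x, f₁ t x < 0 → f₂ t x ≤ 2 * C * D) ∧
      (∀ t ∈ I, ∀ x, f₂ t x < 0 → f₁ t x ≤ 2 * C * D) := by
  have hclose (t : ℝ) (ht : t ∈ I) (x : ℝ) (P : Measure Ω) (hP : P ∈ Ps)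
      (h₁ : Integrable (fun ω => G ω t (Y₁ t ω - upperExp Ps (Y₁ t) + x)) P)
      (h₂ : Integrable (fun ω => G ω t (Y₂ t ω - upperExp Ps (Y₂ t) + x)) P) :
      |∫ ω, G ω t (Y₁ t ω - upperExp Ps (Y₁ t) + x) ∂P
        - ∫ ω, G ω t (Y₂ t ω - upperExp Ps (Y₂ t) + x) ∂P| ≤ 2 * C * D :=
    haveI := hprob P hP
    (abs_integral_comp_sub_le hC (hG · t ht) (hY t ht P hP).1 (hY t ht P hP).2 h₁ h₂).trans
      (by nlinarith [hYD t ht P hP, hmean t ht])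
  have hE : ∀ t ∈ I, 0 ≤ 2 * C * D := fun t ht =>
    mul_nonneg (by positivity) ((abs_nonneg _).trans (hmean t ht))
  refine ⟨fun t ht x hneg => ?_, fun t ht x hneg => ?_⟩
  · rw [hf₁] at hneg
    rw [hf₂]
    exact upperExp_le_of_upperExp_neg (hE t ht) (hB₁ t x)
      (fun P hP h₁ h₂ => by linarith [abs_le.1 (hclose t ht x P hP h₁ h₂)]) hneg
  · rw [hf₂] at hneg
    rw [hf₁]
    exact upperExp_le_of_upperExp_neg (hE t ht) (hB₂ t x)
      (fun P hP h₂ h₁ => by linarith [abs_le.1 (hclose t ht x P hP h₁ h₂)]) hneg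

end UpperExpectation

/-- estimate for the difference of the reflecting functions of
two doubly mean reflected problems: there is a constant `K`, depending only on
`c` and `C`, such that for any data as below,
`sup_t |A¹(t) - A²(t)| ≤ K · sup_t Ê[|Ỹ¹_t - Ỹ²_t|]`. -/
theorem stmt12 (c C : ℝ) (hc : 0 < c) (hcC : c < C) :
    ∃ K : ℝ, 0 ≤ K ∧
      ∀ T : ℝ, 0 < T →
      ∀ (Ω : Type) [MeasurableSpace Ω] (Ps : Set (Measure Ω)),
        Ps.Nonempty → (∀ P ∈ Ps, IsProbabilityMeasure P) →
        ∀ L R : Ω → ℝ → ℝ → ℝ,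
        (∀ ω : Ω, ∀ t ∈ Icc (0 : ℝ) T, ∀ x y : ℝ, |L ω t x - L ω t y| ≤ C * |x - y|) →
        (∀ ω : Ω, ∀ t ∈ Icc (0 : ℝ) T, ∀ x y : ℝ, |R ω t x - R ω t y| ≤ C * |x - y|) →
        ∀ Y₁ Y₂ : ℝ → Ω → ℝ,
        (∀ t ∈ Icc (0 : ℝ) T, Measurable (Y₁ t) ∧ Measurable (Y₂ t)) →
        (∀ t ∈ Icc (0 : ℝ) T, ∀ P ∈ Ps, Integrable (Y₁ t) P ∧ Integrable (Y₂ t) P) →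
        (∀ t ∈ Icc (0 : ℝ) T, BddAbove ((fun P => ∫ ω, Y₁ t ω ∂P) '' Ps) ∧
          BddAbove ((fun P => ∫ ω, Y₂ t ω ∂P) '' Ps)) →
        (∀ t ∈ Icc (0 : ℝ) T,
          BddAbove ((fun P => ∫ ω, |Y₁ t ω - Y₂ t ω| ∂P) '' Ps)) →
        ∀ l₁ r₁ l₂ r₂ : ℝ → ℝ → ℝ,
        (∀ t x : ℝ, l₁ t x = upperExp Ps fun ω => L ω t (Y₁ t ω - upperExp Ps (Y₁ t) + x)) →
        (∀ t x : ℝ, r₁ t x = upperExp Ps fun ω => R ω t (Y₁ t ω - upperExp Ps (Y₁ t) + x)) →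
        (∀ t x : ℝ, l₂ t x = upperExp Ps fun ω => L ω t (Y₂ t ω - upperExp Ps (Y₂ t) + x)) →
        (∀ t x : ℝ, r₂ t x = upperExp Ps fun ω => R ω t (Y₂ t ω - upperExp Ps (Y₂ t) + x)) →
        (∀ t x : ℝ, BddAbove ((fun P => ∫ ω, L ω t (Y₁ t ω - upperExp Ps (Y₁ t) + x) ∂P) '' Ps)) →
        (∀ t x : ℝ, BddAbove ((fun P => ∫ ω, R ω t (Y₁ t ω - upperExp Ps (Y₁ t) + x) ∂P) '' Ps)) →
        (∀ t x : ℝ, BddAbove ((fun P => ∫ ω, L ω t (Y₂ t ω - upperExp Ps (Y₂ t) + x) ∂P) '' Ps)) →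
        (∀ t x : ℝ, BddAbove ((fun P => ∫ ω, R ω t (Y₂ t ω - upperExp Ps (Y₂ t) + x) ∂P) '' Ps)) →
        AssumptionA T c C l₁ r₁ → AssumptionA T c C l₂ r₂ →
        ∀ s₁ s₂ : ℝ → ℝ,
        (∀ t : ℝ, s₁ t = upperExp Ps (Y₁ 0) - upperExp Ps (Y₁ t)) →
        (∀ t : ℝ, s₂ t = upperExp Ps (Y₂ 0) - upperExp Ps (Y₂ t)) →
        ContinuousOn s₁ (Icc 0 T) → ContinuousOn s₂ (Icc 0 T) →
        ∀ a₁ a₂ : ℝ, a₁ = upperExp Ps (Y₁ T) → a₂ = upperExp Ps (Y₂ T) →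
        l₁ T a₁ ≤ 0 → 0 ≤ r₁ T a₁ → l₂ T a₂ ≤ 0 → 0 ≤ r₂ T a₂ →
        ∀ x₁ A₁ x₂ A₂ : ℝ → ℝ,
        IsBSPSolution T l₁ r₁ s₁ a₁ x₁ A₁ → IsBSPSolution T l₂ r₂ s₂ a₂ x₂ A₂ →
        ∀ D : ℝ,
        (∀ t ∈ Icc (0 : ℝ) T, upperExp Ps (fun ω => |Y₁ t ω - Y₂ t ω|) ≤ D) →
        ∀ t ∈ Icc (0 : ℝ) T, |A₁ t - A₂ t| ≤ K * D := by
  have hC : 0 < C := hc.trans hcC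
  refine ⟨4 * C / c + 8, by positivity, ?_⟩
  intro T _ Ω _ Ps hPs hprob L R hL hR Y₁ Y₂ _ hYint hYbdd hYdbdd l₁ r₁ l₂ r₂ hl₁ hr₁ hl₂ hr₂
    hbL₁ hbR₁ hbL₂ hbR₂ hA₁ hA₂ s₁ s₂ hs₁ hs₂ _ _ a₁ a₂ ha₁ ha₂ _ _ _ _ x₁ A₁ x₂ A₂ hsol₁ hsol₂
    D hD t ht
  have hYD : ∀ u ∈ Icc 0 T, ∀ P ∈ Ps, ∫ ω, |Y₁ u ω - Y₂ u ω| ∂P ≤ D := fun u hu P hP =>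
    (le_upperExp (hYdbdd u hu) hP).trans (hD u hu)
  have hD0 : 0 ≤ D :=
    (integral_nonneg fun _ => abs_nonneg _).trans (hYD t ht hPs.some hPs.some_mem)
  have hmean : ∀ u ∈ Icc 0 T, |upperExp Ps (Y₁ u) - upperExp Ps (Y₂ u)| ≤ D := fun u hu =>
    abs_upperExp_sub_le hPs (hYbdd u hu).1 (hYbdd u hu).2 fun P hP => by
      rw [← integral_sub (hYint u hu P hP).1 (hYint u hu P hP).2]
      exact abs_integral_le_integral_abs.trans (hYD u hu P hP)
  obtain ⟨hl₁₂, hl₂₁⟩ :=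
    sign_transfer_of_lipschitz hprob hC.le hL hYint hYD hmean hl₁ hl₂ hbL₁ hbL₂
  obtain ⟨hr₁₂, hr₂₁⟩ :=
    sign_transfer_of_lipschitz hprob hC.le hR hYint hYD hmean hr₁ hr₂ hbR₁ hbR₂
  have hv : ∀ u ∈ Icc 0 T, |(a₁ + s₁ T - s₁ u) - (a₂ + s₂ T - s₂ u)| ≤ D := fun u hu => by
    rw [ha₁, ha₂, hs₁, hs₁, hs₂, hs₂]
    convert hmean u hu using 2
    ring
  have hx := fun u (hu : u ∈ Icc 0 T) => hsol₁.abs_sub_le_of_sign_transfer hsol₂ hc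
    (by positivity) hA₁ hA₂ hl₁₂ hl₂₁ hr₁₂ hr₂₁ hv hu
  calc |A₁ t - A₂ t| ≤ 2 * (2 * C * D / c + 3 * D) + 2 * D := hsol₁.abs_k_sub_le hsol₂ hx hv ht
    _ = (4 * C / c + 8) * D := by ring
end

section
/- Let T > 0, K > 0, M > 0, and let ρ : [0,∞) → [0,∞) be continuous, nondecreasing and concave with ρ(0) = 0, ρ(u) > 0 for u > 0, and ∫_0^ε du/ρ(u) = +∞ for every ε > 0. For integers n ≥ 0 and m ≥ 1, let u_{n,m} : [0,T] → [0,M] be Borel measurable functions such that for all n ≥ 1, m ≥ 1 and t ∈ [0,T], u_{n,m}(t) ≤ K ∫_t^T ρ(u_{n−1,m}(s)) ds. Then lim_{n→∞} sup_{m≥1} sup_{t∈[0,T]} u_{n,m}(t) = 0. -/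
/-!
Put `v n t = sup_{k ≥ n, m ≥ 1} u k m t`. These functions decrease in `n` and satisfy the same
recursive inequality, so by dominated convergence their pointwise limit `W` satisfies
`W t ≤ K ∫_t^T ρ (W s) ds`.

Bihari's argument forces `W = 0`. Let `F t = K ∫_t^T ρ (W s) ds`. If `F` drops from `2c` to `c`
on `[a, b]`, then `c ≤ K (b - a) ρ (2c) ≤ 2K (b - a) ρ c` by concavity, so
`∫_c^{2c} du / ρ u ≤ 2K (b - a)`. Summing over the dyadic levels `F 0 / 2^n` gives
`∫_0^{F 0} du / ρ u ≤ 2KT`, which contradicts the Osgood condition unless `F 0 = 0`.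

Finally `u (n+1) m t ≤ K ∫_0^T ρ (v n s) ds`, and this tends to `0` uniformly in `m` and `t`.
-/

open MeasureTheory Set Filter Topology
open scoped ENNReal Function

lemma ConcaveOn.map_two_mul_le {ρ : ℝ → ℝ} (hρ : ConcaveOn ℝ (Ici 0) ρ) (hρ0 : 0 ≤ ρ 0)
    {x : ℝ} (hx : 0 ≤ x) : ρ (2 * x) ≤ 2 * ρ x := by
  have h := hρ.2 (mem_Ici.2 (by positivity : (0 : ℝ) ≤ 2 * x)) (mem_Ici.2 le_rfl)
    (by norm_num : (0 : ℝ) ≤ 1 / 2) (by norm_num : (0 : ℝ) ≤ 1 / 2) (by norm_num)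
  simp only [smul_eq_mul, mul_zero, add_zero] at h
  rw [show 1 / 2 * (2 * x) = x by ring] at h
  linarith

lemma Ioc_zero_subset_iUnion_Ioc_div_two_pow (c : ℝ) :
    Ioc 0 c ⊆ ⋃ n : ℕ, Ioc (c / 2 ^ (n + 1)) (c / 2 ^ n) := by
  intro x ⟨hx, hxc⟩
  obtain ⟨n, hn, hn'⟩ := exists_nat_pow_near ((one_le_div hx).2 hxc) one_lt_two
  refine mem_iUnion.2 ⟨n, ?_, ?_⟩
  · rw [div_lt_iff₀ (by positivity)]
    rwa [div_lt_iff₀ hx, mul_comm] at hn'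
  · rw [le_div_iff₀ (by positivity)]
    rwa [le_div_iff₀ hx, mul_comm] at hn

section Osgood

variable {ρ : ℝ → ℝ}

lemma setLIntegral_inv_Ioc_le_of_le_two_mul (hρm : Monotone ρ) (hρpos : ∀ x, 0 < x → 0 < ρ x)
    (hρ2 : ∀ x, 0 < x → ρ (2 * x) ≤ 2 * ρ x) {K x y a b : ℝ} (hK : 0 ≤ K) (hx : 0 < x)
    (hy : y ≤ 2 * x) (hab : a ≤ b) (hsub : y - x ≤ K * (b - a) * ρ y) :
    ∫⁻ u in Ioc x y, ENNReal.ofReal (ρ u)⁻¹ ≤ ENNReal.ofReal (2 * K) * volume (Ioc a b) := by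
  have hρx := hρpos x hx
  have hy' : y - x ≤ (2 * K * (b - a)) * ρ x := calc
    y - x ≤ K * (b - a) * ρ (2 * x) := hsub.trans (by gcongr; exact hρm hy)
    _ ≤ K * (b - a) * (2 * ρ x) := by gcongr; exact hρ2 x hx
    _ = 2 * K * (b - a) * ρ x := by ring
  calc ∫⁻ u in Ioc x y, ENNReal.ofReal (ρ u)⁻¹
      ≤ ∫⁻ _ in Ioc x y, ENNReal.ofReal (ρ x)⁻¹ :=
        setLIntegral_mono measurable_const fun u hu =>
          ENNReal.ofReal_le_ofReal (inv_anti₀ hρx (hρm hu.1.le))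
    _ = ENNReal.ofReal ((ρ x)⁻¹ * (y - x)) := by
        rw [setLIntegral_const, Real.volume_Ioc, ENNReal.ofReal_mul (inv_nonneg.2 hρx.le)]
    _ ≤ ENNReal.ofReal (2 * K * (b - a)) :=
        ENNReal.ofReal_le_ofReal ((inv_mul_le_iff₀ hρx).2 (by linarith))
    _ = ENNReal.ofReal (2 * K) * volume (Ioc a b) := by
        rw [Real.volume_Ioc, ENNReal.ofReal_mul (by positivity)]

lemma setLIntegral_inv_le_of_sub_le (hρm : Monotone ρ) (hρpos : ∀ x, 0 < x → 0 < ρ x)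
    (hρ2 : ∀ x, 0 < x → ρ (2 * x) ≤ 2 * ρ x) {F : ℝ → ℝ} {K T : ℝ} (hK : 0 ≤ K) (hT : 0 ≤ T)
    (hFc : ContinuousOn F (Icc 0 T)) (hFanti : AntitoneOn F (Icc 0 T)) (hFT : F T = 0)
    (hsub : ∀ a ∈ Icc 0 T, ∀ b ∈ Icc 0 T, a ≤ b → F a - F b ≤ K * (b - a) * ρ (F a)) :
    ∫⁻ u in Ioc 0 (F 0), ENNReal.ofReal (ρ u)⁻¹ ≤ ENNReal.ofReal (2 * K) * volume (Ioc 0 T) := by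
  rcases le_or_gt (F 0) 0 with hF0 | hF0
  · simp [Ioc_eq_empty_of_le hF0]
  set c := F 0
  have hex : ∀ n : ℕ, ∃ a ∈ Icc 0 T, F a = c / 2 ^ n := fun n =>
    intermediate_value_Icc' hT hFc
      ⟨by rw [hFT]; positivity, div_le_self hF0.le (one_le_pow₀ one_le_two)⟩
  choose a ha hFa using hex
  have ha_mono : Monotone a := by
    refine monotone_nat_of_le_succ fun n => le_of_not_gt fun h => ?_
    have := hFanti (ha (n + 1)) (ha n) h.le
    rw [hFa, hFa, pow_succ] at this
    exact (div_lt_div_of_pos_left hF0 (by positivity)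
      (lt_mul_of_one_lt_right (by positivity) one_lt_two)).not_ge this
  have hslab : ∀ n : ℕ, ∫⁻ u in Ioc (c / 2 ^ (n + 1)) (c / 2 ^ n), ENNReal.ofReal (ρ u)⁻¹
      ≤ ENNReal.ofReal (2 * K) * volume (Ioc (a n) (a (n + 1))) := by
    intro n
    have hhalf : c / 2 ^ n = 2 * (c / 2 ^ (n + 1)) := by rw [pow_succ]; field_simp
    refine setLIntegral_inv_Ioc_le_of_le_two_mul hρm hρpos hρ2 hK (by positivity) hhalf.le
      (ha_mono n.le_succ) ?_
    simpa [hFa] using hsub _ (ha n) _ (ha (n + 1)) (ha_mono n.le_succ)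
  calc ∫⁻ u in Ioc 0 c, ENNReal.ofReal (ρ u)⁻¹
      ≤ ∫⁻ u in ⋃ n : ℕ, Ioc (c / 2 ^ (n + 1)) (c / 2 ^ n), ENNReal.ofReal (ρ u)⁻¹ :=
        lintegral_mono_set (Ioc_zero_subset_iUnion_Ioc_div_two_pow c)
    _ ≤ ∑' n : ℕ, ∫⁻ u in Ioc (c / 2 ^ (n + 1)) (c / 2 ^ n), ENNReal.ofReal (ρ u)⁻¹ :=
        lintegral_iUnion_le _ _
    _ ≤ ∑' n : ℕ, ENNReal.ofReal (2 * K) * volume (Ioc (a n) (a (n + 1))) :=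
        ENNReal.tsum_le_tsum hslab
    _ = ENNReal.ofReal (2 * K) * volume (⋃ n, Ioc (a n) (a (n + 1))) := by
        have hdisj : Pairwise (Disjoint on fun n => Ioc (a n) (a (n + 1))) := by
          simpa only [Order.succ_eq_add_one] using ha_mono.pairwise_disjoint_on_Ioc_succ
        rw [ENNReal.tsum_mul_left, measure_iUnion hdisj fun _ => measurableSet_Ioc]
    _ ≤ ENNReal.ofReal (2 * K) * volume (Ioc 0 T) := by
        gcongr
        exact iUnion_subset fun n => Ioc_subset_Ioc (ha n).1 (ha (n + 1)).2

lemma Monotone.abs_map_le_of_mem_Icc (hρ : Monotone ρ) {x a b : ℝ} (hx : x ∈ Icc a b) :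
    |ρ x| ≤ max |ρ a| |ρ b| :=
  abs_le_max_abs_abs (hρ hx.1) (hρ hx.2)

lemma integrableOn_comp_of_mem_Icc (hρm : Monotone ρ) {T M : ℝ} {W : ℝ → ℝ}
    (hWm : Measurable W) (hW : ∀ t ∈ Icc 0 T, W t ∈ Icc 0 M) :
    IntegrableOn (fun s => ρ (W s)) (Icc 0 T) :=
  Measure.integrableOn_of_bounded (by simp) (hρm.measurable.comp hWm).aestronglyMeasurable
    ((ae_restrict_iff' measurableSet_Icc).2 <| ae_of_all _ fun t ht =>
      hρm.abs_map_le_of_mem_Icc (hW t ht))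

lemma intervalIntegrable_comp_of_mem_Icc (hρm : Monotone ρ) {T M t : ℝ} {W : ℝ → ℝ}
    (hWm : Measurable W) (hW : ∀ t ∈ Icc 0 T, W t ∈ Icc 0 M) (ht : t ∈ Icc 0 T) :
    IntervalIntegrable (fun s => ρ (W s)) volume t T :=
  ((integrableOn_comp_of_mem_Icc hρm hWm hW).mono_set
    (by rw [uIcc_of_le ht.2]; exact Icc_subset_Icc_left ht.1)).intervalIntegrable

theorem eq_zero_of_le_mul_integral (hρm : Monotone ρ) (hρ0 : 0 ≤ ρ 0)
    (hρpos : ∀ x, 0 < x → 0 < ρ x) (hρ2 : ∀ x, 0 < x → ρ (2 * x) ≤ 2 * ρ x)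
    (hOsgood : ∀ ε, 0 < ε → ∫⁻ u in Ioc 0 ε, ENNReal.ofReal (ρ u)⁻¹ = ∞)
    {K T : ℝ} (hK : 0 ≤ K) {W : ℝ → ℝ} (hW0 : ∀ t ∈ Icc 0 T, 0 ≤ W t)
    (hint : IntegrableOn (fun s => ρ (W s)) (Icc 0 T))
    (hW : ∀ t ∈ Icc 0 T, W t ≤ K * ∫ s in t..T, ρ (W s)) :
    ∀ t ∈ Icc 0 T, W t = 0 := by
  intro t ht
  have hT : 0 ≤ T := ht.1.trans ht.2
  set F : ℝ → ℝ := fun t => K * ∫ s in t..T, ρ (W s)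
  have hii : ∀ a ∈ Icc 0 T, ∀ b ∈ Icc 0 T, IntervalIntegrable (fun s => ρ (W s)) volume a b :=
    fun a ha b hb => (hint.mono_set (uIcc_subset_Icc ha hb)).intervalIntegrable
  have hFsub : ∀ a ∈ Icc 0 T, ∀ b ∈ Icc 0 T, F a - F b = K * ∫ s in a..b, ρ (W s) := by
    intro a ha b hb
    show K * (∫ s in a..T, ρ (W s)) - K * (∫ s in b..T, ρ (W s)) = _
    rw [← intervalIntegral.integral_add_adjacent_intervals (hii a ha b hb)
      (hii b hb T ⟨hT, le_rfl⟩)]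
    ring
  have hFanti : AntitoneOn F (Icc 0 T) := fun a ha b hb hab => by
    have : 0 ≤ ∫ s in a..b, ρ (W s) := intervalIntegral.integral_nonneg hab fun s hs =>
      hρ0.trans (hρm (hW0 s ⟨ha.1.trans hs.1, hs.2.trans hb.2⟩))
    linarith [hFsub a ha b hb, mul_nonneg hK this]
  have hFc : ContinuousOn F (Icc 0 T) := by
    have := intervalIntegral.continuousOn_primitive_interval_left
      (a := 0) (b := T) (by rwa [uIcc_of_le hT])
    rw [uIcc_of_le hT] at this
    exact continuousOn_const.mul this
  have hsub : ∀ a ∈ Icc 0 T, ∀ b ∈ Icc 0 T, a ≤ b → F a - F b ≤ K * (b - a) * ρ (F a) := by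
    intro a ha b hb hab
    have hle : ∫ s in a..b, ρ (W s) ≤ ∫ _ in a..b, ρ (F a) :=
      intervalIntegral.integral_mono_on hab (hii a ha b hb) intervalIntegrable_const
        fun s hs => by
          have hs' : s ∈ Icc 0 T := ⟨ha.1.trans hs.1, hs.2.trans hb.2⟩
          exact hρm ((hW s hs').trans (hFanti ha hs' hs.1))
    rw [hFsub a ha b hb, mul_assoc]
    gcongr
    simpa using hle
  have hF0 : F 0 ≤ 0 := by
    by_contra! h
    have := setLIntegral_inv_le_of_sub_le hρm hρpos hρ2 hK hT hFc hFanti (by simp [F]) hsub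
    rw [hOsgood _ h, Real.volume_Ioc] at this
    exact ENNReal.mul_ne_top ENNReal.ofReal_ne_top ENNReal.ofReal_ne_top (top_le_iff.1 this)
  exact le_antisymm ((hW t ht).trans ((hFanti ⟨le_rfl, hT⟩ ht ht.1).trans hF0)) (hW0 t ht)

lemma tendsto_intervalIntegral_comp (hρc : Continuous ρ) (hρm : Monotone ρ) {T M a : ℝ}
    {v : ℕ → ℝ → ℝ} {W : ℝ → ℝ} (hvm : ∀ n, Measurable (v n))
    (hv : ∀ n, ∀ t ∈ Icc 0 T, v n t ∈ Icc 0 M)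
    (hlim : ∀ t ∈ Icc 0 T, Tendsto (fun n => v n t) atTop (𝓝 (W t))) (ha : a ∈ Icc 0 T) :
    Tendsto (fun n => ∫ s in a..T, ρ (v n s)) atTop (𝓝 (∫ s in a..T, ρ (W s))) := by
  have hmem : ∀ s ∈ uIoc a T, s ∈ Icc 0 T := fun s hs => by
    rw [uIoc_of_le ha.2] at hs
    exact ⟨ha.1.trans hs.1.le, hs.2⟩
  refine intervalIntegral.tendsto_integral_filter_of_dominated_convergence
    (fun _ => max |ρ 0| |ρ M|)
    (Eventually.of_forall fun n => (hρm.measurable.comp (hvm n)).aestronglyMeasurable)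
    (Eventually.of_forall fun n => ae_of_all _ fun s hs =>
      hρm.abs_map_le_of_mem_Icc (hv n s (hmem s hs)))
    intervalIntegrable_const
    (ae_of_all _ fun s hs => (hρc.tendsto _).comp (hlim s (hmem s hs)))

theorem tendsto_zero_of_antitone_of_le_integral (hρc : Continuous ρ) (hρm : Monotone ρ)
    (hρ0 : 0 ≤ ρ 0) (hρpos : ∀ x, 0 < x → 0 < ρ x) (hρ2 : ∀ x, 0 < x → ρ (2 * x) ≤ 2 * ρ x)
    (hOsgood : ∀ ε, 0 < ε → ∫⁻ u in Ioc 0 ε, ENNReal.ofReal (ρ u)⁻¹ = ∞)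
    {K T M : ℝ} (hK : 0 ≤ K) {v : ℕ → ℝ → ℝ} (hvm : ∀ n, Measurable (v n))
    (hv : ∀ n, ∀ t ∈ Icc 0 T, v n t ∈ Icc 0 M)
    (hanti : ∀ t ∈ Icc 0 T, Antitone fun n => v n t)
    (hrec : ∀ n, ∀ t ∈ Icc 0 T, v (n + 1) t ≤ K * ∫ s in t..T, ρ (v n s)) :
    ∀ t ∈ Icc 0 T, Tendsto (fun n => v n t) atTop (𝓝 0) := by
  set W : ℝ → ℝ := fun t => ⨅ n, v n t
  have hlim : ∀ t ∈ Icc 0 T, Tendsto (fun n => v n t) atTop (𝓝 (W t)) := fun t ht =>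
    tendsto_atTop_ciInf (hanti t ht) ⟨0, forall_mem_range.2 fun n => (hv n t ht).1⟩
  have hW : ∀ t ∈ Icc 0 T, W t ∈ Icc 0 M := fun t ht =>
    isClosed_Icc.mem_of_tendsto (hlim t ht) (Eventually.of_forall fun n => hv n t ht)
  have hWrec : ∀ t ∈ Icc 0 T, W t ≤ K * ∫ s in t..T, ρ (W s) := fun t ht =>
    le_of_tendsto_of_tendsto' ((hlim t ht).comp (tendsto_add_atTop_nat 1))
      ((tendsto_intervalIntegral_comp hρc hρm hvm hv hlim ht).const_mul K) fun n => hrec n t ht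
  have hW_eq_zero := eq_zero_of_le_mul_integral hρm hρ0 hρpos hρ2 hOsgood hK (fun t ht => (hW t ht).1)
    (integrableOn_comp_of_mem_Icc hρm (Measurable.iInf hvm) hW) hWrec
  intro t ht
  simpa [hW_eq_zero t ht] using hlim t ht

end Osgood

/-- `sup {u k m t | k ≥ n, m ≥ 1}`, with `m + 1` running over `m ≥ 1`. -/
noncomputable def tailSup (u : ℕ → ℕ → ℝ → ℝ) (n : ℕ) (t : ℝ) : ℝ :=
  ⨆ p : ℕ × ℕ, u (n + p.1) (p.2 + 1) t

section tailSup

variable {u : ℕ → ℕ → ℝ → ℝ} {M t : ℝ}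

lemma le_tailSup (hu : ∀ k m, 1 ≤ m → u k m t ≤ M) {n k m : ℕ} (hnk : n ≤ k) (hm : 1 ≤ m) :
    u k m t ≤ tailSup u n t := by
  obtain ⟨j, rfl⟩ := Nat.exists_eq_add_of_le hnk
  obtain ⟨i, rfl⟩ := Nat.exists_eq_add_of_le' hm
  exact le_ciSup (f := fun p : ℕ × ℕ => u (n + p.1) (p.2 + 1) t)
    ⟨M, forall_mem_range.2 fun p => hu _ _ (Nat.le_add_left 1 p.2)⟩ (j, i)

lemma tailSup_mem_Icc (hu : ∀ k m, 1 ≤ m → u k m t ∈ Icc 0 M) {n : ℕ} :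
    tailSup u n t ∈ Icc 0 M :=
  ⟨(hu n 1 le_rfl).1.trans (le_tailSup (fun k m hm => (hu k m hm).2) le_rfl le_rfl),
    ciSup_le fun p => (hu _ _ (Nat.le_add_left 1 p.2)).2⟩

lemma antitone_tailSup (hu : ∀ k m, 1 ≤ m → u k m t ≤ M) : Antitone fun n => tailSup u n t :=
  antitone_nat_of_succ_le fun _ => ciSup_le fun _ => le_tailSup hu (by omega) (by omega)

lemma measurable_tailSup (hum : ∀ k m, 1 ≤ m → Measurable (u k m)) (n : ℕ) :
    Measurable (tailSup u n) :=
  Measurable.iSup fun p => hum _ _ (Nat.le_add_left 1 p.2)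

lemma tailSup_succ_le {ρ : ℝ → ℝ} (hρm : Monotone ρ) {K T : ℝ} (hK : 0 ≤ K)
    (hum : ∀ k m, 1 ≤ m → Measurable (u k m))
    (hu : ∀ k m, 1 ≤ m → ∀ t ∈ Icc 0 T, u k m t ∈ Icc 0 M)
    (hrec : ∀ k m, 1 ≤ m → ∀ t ∈ Icc 0 T, u (k + 1) m t ≤ K * ∫ s in t..T, ρ (u k m s))
    {n : ℕ} (ht : t ∈ Icc 0 T) :
    tailSup u (n + 1) t ≤ K * ∫ s in t..T, ρ (tailSup u n s) := by
  refine ciSup_le fun p => ?_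
  have hp : 1 ≤ p.2 + 1 := Nat.le_add_left 1 p.2
  rw [add_right_comm]
  refine (hrec _ _ hp t ht).trans ?_
  gcongr
  exact intervalIntegral.integral_mono_on ht.2
    (intervalIntegrable_comp_of_mem_Icc hρm (hum _ _ hp) (hu _ _ hp) ht)
    (intervalIntegrable_comp_of_mem_Icc hρm (measurable_tailSup hum n)
      (fun s hs => tailSup_mem_Icc fun k m hm => hu k m hm s hs) ht)
    fun s hs => hρm (le_tailSup (fun k m hm => (hu k m hm s ⟨ht.1.trans hs.1, hs.2⟩).2)
      (Nat.le_add_right n p.1) hp)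

end tailSup

lemma ContinuousOn.continuous_comp_max_zero {ρ : ℝ → ℝ} (hρ : ContinuousOn ρ (Ici 0)) :
    Continuous fun x => ρ (max x 0) :=
  hρ.comp_continuous (continuous_id.max continuous_const) fun x => le_max_right x 0

lemma MonotoneOn.monotone_comp_max_zero {ρ : ℝ → ℝ} (hρ : MonotoneOn ρ (Ici 0)) :
    Monotone fun x => ρ (max x 0) := fun x y h =>
  hρ (le_max_right x 0) (le_max_right y 0) (max_le_max h le_rfl)

theorem eventually_le_of_le_mul_integral {ρ : ℝ → ℝ} (hρc : Continuous ρ) (hρm : Monotone ρ)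
    (hρ0 : ρ 0 = 0) (hρpos : ∀ x, 0 < x → 0 < ρ x) (hρ2 : ∀ x, 0 < x → ρ (2 * x) ≤ 2 * ρ x)
    (hOsgood : ∀ ε, 0 < ε → ∫⁻ u in Ioc 0 ε, ENNReal.ofReal (ρ u)⁻¹ = ∞)
    {K T M : ℝ} (hK : 0 ≤ K) (hT : 0 ≤ T) {u : ℕ → ℕ → ℝ → ℝ}
    (hum : ∀ k m, 1 ≤ m → Measurable (u k m))
    (hu : ∀ k m, 1 ≤ m → ∀ t ∈ Icc 0 T, u k m t ∈ Icc 0 M)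
    (hrec : ∀ k m, 1 ≤ m → ∀ t ∈ Icc 0 T, u (k + 1) m t ≤ K * ∫ s in t..T, ρ (u k m s)) :
    ∀ ε, 0 < ε → ∃ N, ∀ n ≥ N, ∀ m, 1 ≤ m → ∀ t ∈ Icc 0 T, u n m t ≤ ε := by
  have hv : ∀ n, ∀ t ∈ Icc 0 T, tailSup u n t ∈ Icc 0 M := fun _ t ht =>
    tailSup_mem_Icc fun k m hm => hu k m hm t ht
  have hvrec : ∀ n, ∀ t ∈ Icc 0 T,
      tailSup u (n + 1) t ≤ K * ∫ s in t..T, ρ (tailSup u n s) :=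
    fun _ _ ht => tailSup_succ_le hρm hK hum hu hrec ht
  have hv_tendsto := tendsto_zero_of_antitone_of_le_integral hρc hρm hρ0.ge hρpos hρ2 hOsgood hK
    (measurable_tailSup hum) hv (fun t ht => antitone_tailSup fun k m hm => (hu k m hm t ht).2)
    hvrec
  have hint_tendsto : Tendsto (fun n => K * ∫ s in 0..T, ρ (tailSup u n s)) atTop (𝓝 0) := by
    simpa [hρ0] using (tendsto_intervalIntegral_comp hρc hρm (measurable_tailSup hum) hv hv_tendsto
      ⟨le_rfl, hT⟩).const_mul K
  intro ε hε
  obtain ⟨N, hN⟩ := eventually_atTop.1 (hint_tendsto.eventually (ge_mem_nhds hε))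
  refine ⟨N + 1, fun n hn m hm t ht => ?_⟩
  obtain ⟨n, rfl⟩ : ∃ k, n = k + 1 := ⟨n - 1, by omega⟩
  calc u (n + 1) m t ≤ tailSup u (n + 1) t :=
        le_tailSup (fun k m hm => (hu k m hm t ht).2) le_rfl hm
    _ ≤ K * ∫ s in t..T, ρ (tailSup u n s) := hvrec n t ht
    _ ≤ K * ∫ s in 0..T, ρ (tailSup u n s) := by
        gcongr
        exact intervalIntegral.integral_mono_interval ht.1 ht.2 le_rfl
          ((ae_restrict_iff' measurableSet_Ioc).2 <| ae_of_all _ fun s hs =>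
            hρ0.ge.trans (hρm (hv n s ⟨hs.1.le, hs.2⟩).1))
          (intervalIntegrable_comp_of_mem_Icc hρm (measurable_tailSup hum n) (hv n) ⟨le_rfl, hT⟩)
    _ ≤ ε := hN n (by omega)

theorem stmt16_general (T K M : ℝ) (hT : 0 < T) (hK : 0 < K)
    (ρ : ℝ → ℝ)
    (hρc : ContinuousOn ρ (Ici 0)) (hρm : MonotoneOn ρ (Ici 0))
    (hρconc : ConcaveOn ℝ (Ici 0) ρ) (hρ0 : ρ 0 = 0)
    (hρpos : ∀ u : ℝ, 0 < u → 0 < ρ u)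
    (hOsgood : ∀ ε : ℝ, 0 < ε →
      (∫⁻ u in Ioc (0 : ℝ) ε, ENNReal.ofReal (ρ u)⁻¹) = ∞)
    (u : ℕ → ℕ → ℝ → ℝ)
    (hmeas : ∀ n m : ℕ, 1 ≤ m → Measurable (u n m))
    (hrange : ∀ n m : ℕ, 1 ≤ m → ∀ t ∈ Icc (0 : ℝ) T, u n m t ∈ Icc 0 M)
    (hrec : ∀ n m : ℕ, 1 ≤ n → 1 ≤ m → ∀ t ∈ Icc (0 : ℝ) T,
      u n m t ≤ K * ∫ s in t..T, ρ (u (n - 1) m s)) :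
    ∀ ε : ℝ, 0 < ε → ∃ N : ℕ, ∀ n ≥ N, ∀ m : ℕ, 1 ≤ m →
      ∀ t ∈ Icc (0 : ℝ) T, u n m t ≤ ε := by
  have hρ' : ∀ x, 0 ≤ x → ρ (max x 0) = ρ x := fun x hx => by rw [max_eq_left hx]
  refine eventually_le_of_le_mul_integral hρc.continuous_comp_max_zero
    hρm.monotone_comp_max_zero (by simp [hρ0]) (fun x hx => hρ' x hx.le ▸ hρpos x hx)
    (fun x hx => ?_) (fun ε hε => ?_) hK.le hT.le hmeas hrange fun k m hm t ht => ?_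
  · rw [hρ' _ (by positivity), hρ' x hx.le]
    exact hρconc.map_two_mul_le hρ0.ge hx.le
  · rw [← hOsgood ε hε]
    exact setLIntegral_congr_fun measurableSet_Ioc fun x hx => by rw [hρ' x hx.1.le]
  · refine (hrec (k + 1) m (Nat.le_add_left 1 k) hm t ht).trans_eq ?_
    rw [Nat.add_sub_cancel]
    congr 1
    refine intervalIntegral.integral_congr fun s hs => ?_
    rw [uIcc_of_le ht.2] at hs
    exact (hρ' _ (hrange k m hm s ⟨ht.1.trans hs.1, hs.2⟩).1).symm

/-- Bihari-type convergence of the Picard scheme: under the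
Osgood condition on `ρ`, if the uniformly bounded functions `u_{n,m}` satisfy
`u_{n,m}(t) ≤ K ∫_t^T ρ(u_{n-1,m}(s)) ds`, then
`sup_{m ≥ 1} sup_{t ∈ [0,T]} u_{n,m}(t) → 0` as `n → ∞`. -/
theorem stmt16 (T K M : ℝ) (hT : 0 < T) (hK : 0 < K) (hM : 0 < M)
    (ρ : ℝ → ℝ)
    (hρc : ContinuousOn ρ (Ici 0)) (hρm : MonotoneOn ρ (Ici 0))
    (hρconc : ConcaveOn ℝ (Ici 0) ρ) (hρ0 : ρ 0 = 0)
    (hρpos : ∀ u : ℝ, 0 < u → 0 < ρ u)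
    (hOsgood : ∀ ε : ℝ, 0 < ε →
      (∫⁻ u in Ioc (0 : ℝ) ε, ENNReal.ofReal (ρ u)⁻¹) = ∞)
    (u : ℕ → ℕ → ℝ → ℝ)
    (hmeas : ∀ n m : ℕ, 1 ≤ m → Measurable (u n m))
    (hrange : ∀ n m : ℕ, 1 ≤ m → ∀ t ∈ Icc (0 : ℝ) T, u n m t ∈ Icc 0 M)
    (hrec : ∀ n m : ℕ, 1 ≤ n → 1 ≤ m → ∀ t ∈ Icc (0 : ℝ) T,
      u n m t ≤ K * ∫ s in t..T, ρ (u (n - 1) m s)) :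
    ∀ ε : ℝ, 0 < ε → ∃ N : ℕ, ∀ n ≥ N, ∀ m : ℕ, 1 ≤ m →
      ∀ t ∈ Icc (0 : ℝ) T, u n m t ≤ ε :=
  stmt16_general T K M hT hK ρ hρc hρm hρconc hρ0 hρpos hOsgood u hmeas hrange hrec
end
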